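/- arXiv:2011.09503 — 9 statements merged into one kernel-verified Lean document; each statement's English description precedes it below -/
import Mathlib

section
/- For H ∈ (0,1), the integral ∫_ℝ [(1−u)^{H−1/2} 1_{u≤1} − (−u)^{H−1/2} 1_{u≤0}]² du equals [Γ(H+1/2)]² / (sin(πH) Γ(2H+1)). -/
/-!
Write `a = H - 1/2` and `G s = (1 + s)^a - s^a`. The substitution `u = -s` on `u ≤ 0` turns the
integral into `∫₀^∞ G² + ∫₀¹ (1 - u)^(2a) = ∫₀^∞ G² + 1/(2a+1)`. Integrating
`d/ds (s G²) = (2a+1) G² - 2a (1+s)^(a-1) G` over `(0, ∞)` reduces `∫ G²` to `∫ (1+s)^(a-1) G`.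
For `a < 0` this is a difference of two Beta integrals `∫₀^∞ t^(p-1) (1+t)^(-(p+q)) dt = B(p, q)`;
for `a > 0` those diverge separately, and one integrates `d/ds ((1+s)^a G)` instead, which leaves
a single Beta integral. The total is `Γ(a+1) Γ(1-2a) / (Γ(1-a) (2a+1))`, and Euler's reflection
formula at `a` and at `2a` turns it into the stated form.
-/

open MeasureTheory Real Set Filter Asymptotics Topology

theorem integrableOn_Ioi_of_isBigO_rpow {f : ℝ → ℝ} {p q : ℝ} (hf : ContinuousOn f (Ioi 0))
    (hp : -1 < p) (h0 : f =O[𝓝[>] 0] (· ^ p)) (hq : q < -1) (htop : f =O[atTop] (· ^ q)) :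
    IntegrableOn f (Ioi 0) := by
  simpa using mellin_convergent_of_isBigO_scalar (s := 1) (a := -q) (b := -p)
    (hf.locallyIntegrableOn measurableSet_Ioi) (by simpa using htop) (by linarith)
    (by simpa using h0) (by linarith)

theorem isBigO_mul_rpow_add {l : Filter ℝ} (hl : ∀ᶠ s in l, 0 < s) {f g : ℝ → ℝ} {p q : ℝ}
    (hf : f =O[l] (· ^ p)) (hg : g =O[l] (· ^ q)) :
    (fun s => f s * g s) =O[l] (· ^ (p + q)) :=
  (hf.mul hg).trans_eventuallyEq (hl.mono fun _ hs => (rpow_add hs p q).symm)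

theorem tendsto_rpow_nhdsGT_zero {r : ℝ} (hr : 0 < r) : Tendsto (· ^ r) (𝓝[>] (0 : ℝ)) (𝓝 0) := by
  simpa [zero_rpow hr.ne'] using
    (continuousAt_rpow_const 0 r (Or.inr hr.le)).tendsto.mono_left nhdsWithin_le_nhds

theorem tendsto_rpow_atTop_of_neg {r : ℝ} (hr : r < 0) : Tendsto (· ^ r) atTop (𝓝 (0 : ℝ)) := by
  simpa using tendsto_rpow_neg_atTop (neg_pos.2 hr)

theorem isBigO_one_add_rpow_nhdsGT_zero (b : ℝ) :
    (fun s : ℝ => (1 + s) ^ b) =O[𝓝[>] 0] (· ^ (0 : ℝ)) := by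
  have h : Tendsto (fun s : ℝ => (1 + s) ^ b) (𝓝[>] 0) (𝓝 1) := by
    simpa using ((continuous_const.add continuous_id).continuousAt.rpow_const
      (Or.inl (by norm_num : (1 : ℝ) + 0 ≠ 0))).tendsto.mono_left nhdsWithin_le_nhds
  simpa using h.isBigO_one ℝ

theorem isBigO_one_add_rpow_atTop (b : ℝ) : (fun s : ℝ => (1 + s) ^ b) =O[atTop] (· ^ b) := by
  have hlim : Tendsto (fun s : ℝ => (1 + s⁻¹) ^ b) atTop (𝓝 1) := by
    simpa using (tendsto_inv_atTop_zero.const_add 1).rpow_const (p := b) (Or.inl (by norm_num))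
  refine ((hlim.isBigO_one ℝ).mul (isBigO_refl (· ^ b) atTop)).congr' ?_ (by simp)
  filter_upwards [Ioi_mem_atTop 0] with s (hs : 0 < s)
  rw [← mul_rpow (by positivity) hs.le, add_mul, inv_mul_cancel₀ hs.ne', one_mul, add_comm]

theorem ofReal_rpow_mul_one_sub_rpow {x : ℝ} (hx : x ∈ Icc 0 1) (p q : ℝ) :
    ((x ^ p * (1 - x) ^ q : ℝ) : ℂ) = (x : ℂ) ^ (p : ℂ) * (1 - (x : ℂ)) ^ (q : ℂ) := by
  rw [Complex.ofReal_mul, Complex.ofReal_cpow hx.1, Complex.ofReal_cpow (sub_nonneg.2 hx.2)]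
  push_cast; rfl

theorem integrableOn_rpow_mul_one_sub_rpow {p q : ℝ} (hp : 0 < p) (hq : 0 < q) :
    IntegrableOn (fun x : ℝ => x ^ (p - 1) * (1 - x) ^ (q - 1)) (Ioo 0 1) := by
  have h := Complex.betaIntegral_convergent (u := p) (v := q) (by simpa) (by simpa)
  rw [intervalIntegrable_iff_integrableOn_Ioo_of_le zero_le_one] at h
  refine IntegrableOn.congr_fun (Integrable.re h) (fun x hx => ?_) measurableSet_Ioo
  rw [← Complex.ofReal_re (_ * _), ofReal_rpow_mul_one_sub_rpow (Ioo_subset_Icc_self hx)]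
  push_cast; rfl

theorem integral_rpow_mul_one_sub_rpow {p q : ℝ} (hp : 0 < p) (hq : 0 < q) :
    ∫ x in Ioo 0 1, x ^ (p - 1) * (1 - x) ^ (q - 1) = Gamma p * Gamma q / Gamma (p + q) := by
  have h := Complex.betaIntegral_eq_Gamma_mul_div p q (by simpa) (by simpa)
  rw [Complex.betaIntegral, intervalIntegral.integral_of_le zero_le_one,
    integral_Ioc_eq_integral_Ioo] at h
  apply Complex.ofReal_injective
  rw [← integral_complex_ofReal, Complex.ofReal_div, Complex.ofReal_mul, ← Complex.Gamma_ofReal,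
    ← Complex.Gamma_ofReal, ← Complex.Gamma_ofReal, Complex.ofReal_add, ← h]
  refine setIntegral_congr_fun measurableSet_Ioo (fun x hx => ?_)
  rw [ofReal_rpow_mul_one_sub_rpow (Ioo_subset_Icc_self hx)]
  push_cast; rfl

theorem injOn_div_one_add_self : InjOn (fun t : ℝ => t / (1 + t)) (Ioi 0) := by
  intro s hs t ht hst
  have hs' : (1 + s) ≠ 0 := by have := mem_Ioi.1 hs; positivity
  have ht' : (1 + t) ≠ 0 := by have := mem_Ioi.1 ht; positivity
  field_simp at hst
  linarith

theorem image_div_one_add_self_Ioi : (fun t : ℝ => t / (1 + t)) '' Ioi 0 = Ioo 0 1 := by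
  ext x
  constructor
  · rintro ⟨t, ht, rfl⟩
    have ht : 0 < t := ht
    exact ⟨by positivity, (div_lt_one (by positivity)).2 (by linarith)⟩
  · rintro ⟨hx0, hx1⟩
    refine ⟨x / (1 - x), div_pos hx0 (by linarith), ?_⟩
    have : 1 - x ≠ 0 := by linarith
    field_simp
    ring

theorem hasDerivAt_div_one_add_self {t : ℝ} (ht : 0 < t) :
    HasDerivAt (fun t : ℝ => t / (1 + t)) ((1 + t) ^ 2)⁻¹ t := by
  refine ((hasDerivAt_id' t).div ((hasDerivAt_id' t).const_add 1) (by positivity)).congr_deriv ?_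
  ring

theorem setIntegral_Ioo_zero_one_eq_setIntegral_Ioi (g : ℝ → ℝ) :
    ∫ x in Ioo 0 1, g x = ∫ t in Ioi 0, ((1 + t) ^ 2)⁻¹ * g (t / (1 + t)) := by
  rw [← image_div_one_add_self_Ioi, integral_image_eq_integral_abs_deriv_smul measurableSet_Ioi
    (fun t ht => (hasDerivAt_div_one_add_self ht).hasDerivWithinAt) injOn_div_one_add_self]
  refine setIntegral_congr_fun measurableSet_Ioi (fun t ht => ?_)
  have ht : 0 < t := ht
  rw [smul_eq_mul, abs_of_pos (by positivity)]

theorem integrableOn_Ioo_zero_one_iff_integrableOn_Ioi (g : ℝ → ℝ) :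
    IntegrableOn g (Ioo 0 1) ↔
      IntegrableOn (fun t => ((1 + t) ^ 2)⁻¹ * g (t / (1 + t))) (Ioi 0) := by
  rw [← image_div_one_add_self_Ioi, integrableOn_image_iff_integrableOn_abs_deriv_smul
    measurableSet_Ioi (fun t ht => (hasDerivAt_div_one_add_self ht).hasDerivWithinAt)
    injOn_div_one_add_self]
  refine integrableOn_congr_fun (fun t ht => ?_) measurableSet_Ioi
  have ht : 0 < t := ht
  rw [smul_eq_mul, abs_of_pos (by positivity)]

theorem inv_sq_mul_rpow_mul_one_sub_rpow {t : ℝ} (ht : 0 < t) (p q : ℝ) :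
    ((1 + t) ^ 2)⁻¹ * ((t / (1 + t)) ^ (p - 1) * (1 - t / (1 + t)) ^ (q - 1))
      = t ^ (p - 1) * (1 + t) ^ (-(p + q)) := by
  have h1t : 0 < 1 + t := by positivity
  have hsub : 1 - t / (1 + t) = (1 + t)⁻¹ := by field_simp; ring
  have hsplit : (1 + t) ^ (p + q) = (1 + t) ^ (p - 1) * (1 + t) ^ (q - 1) * (1 + t) ^ 2 := by
    rw [← rpow_add h1t, ← rpow_natCast, ← rpow_add h1t]
    norm_num; ring_nf
  rw [hsub, div_rpow ht.le h1t.le, inv_rpow h1t.le, rpow_neg h1t.le, hsplit]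
  field_simp

theorem integrableOn_rpow_mul_one_add_rpow_neg {p q : ℝ} (hp : 0 < p) (hq : 0 < q) :
    IntegrableOn (fun t : ℝ => t ^ (p - 1) * (1 + t) ^ (-(p + q))) (Ioi 0) :=
  ((integrableOn_Ioo_zero_one_iff_integrableOn_Ioi _).1
    (integrableOn_rpow_mul_one_sub_rpow hp hq)).congr_fun
      (fun _ ht => inv_sq_mul_rpow_mul_one_sub_rpow ht p q) measurableSet_Ioi

theorem integral_rpow_mul_one_add_rpow_neg {p q : ℝ} (hp : 0 < p) (hq : 0 < q) :
    ∫ t in Ioi 0, t ^ (p - 1) * (1 + t) ^ (-(p + q)) = Gamma p * Gamma q / Gamma (p + q) := by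
  rw [← integral_rpow_mul_one_sub_rpow hp hq, setIntegral_Ioo_zero_one_eq_setIntegral_Ioi]
  exact setIntegral_congr_fun measurableSet_Ioi
    (fun t ht => (inv_sq_mul_rpow_mul_one_sub_rpow ht p q).symm)

noncomputable def rpowIncr (a s : ℝ) : ℝ := (1 + s) ^ a - s ^ a

theorem hasDerivAt_rpowIncr (a : ℝ) {s : ℝ} (hs : 0 < s) :
    HasDerivAt (rpowIncr a) (a * (1 + s) ^ (a - 1) - a * s ^ (a - 1)) s := by
  have h1 : HasDerivAt (fun s : ℝ => (1 + s) ^ a) (a * (1 + s) ^ (a - 1)) s := by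
    simpa using ((hasDerivAt_id' s).const_add 1).rpow_const (p := a) (Or.inl (by positivity))
  exact h1.sub (hasDerivAt_rpow_const (Or.inl hs.ne'))

theorem continuousOn_rpowIncr (a : ℝ) : ContinuousOn (rpowIncr a) (Ioi 0) :=
  fun _ hs => (hasDerivAt_rpowIncr a hs).continuousAt.continuousWithinAt

theorem abs_rpowIncr_le_of_le_one {a s : ℝ} (ha : a ≤ 1) (hs0 : 0 < s) (hs1 : s ≤ 1) :
    |rpowIncr a s| ≤ 3 * s ^ (-|a|) := by
  have h1 : (1 + s) ^ a ≤ 2 := by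
    calc (1 + s) ^ a ≤ (1 + s) ^ (1 : ℝ) := rpow_le_rpow_of_exponent_le (by linarith) ha
      _ ≤ 2 := by rw [rpow_one]; linarith
  have h2 : s ^ a ≤ s ^ (-|a|) := rpow_le_rpow_of_exponent_ge hs0 hs1 (neg_abs_le a)
  have h3 : 1 ≤ s ^ (-|a|) := one_le_rpow_of_pos_of_le_one_of_nonpos hs0 hs1 (by simp)
  calc |rpowIncr a s| ≤ |(1 + s) ^ a| + |s ^ a| := abs_sub _ _
    _ = (1 + s) ^ a + s ^ a := by
      rw [abs_of_nonneg (by positivity), abs_of_nonneg (by positivity)]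
    _ ≤ 3 * s ^ (-|a|) := by linarith

theorem abs_rpowIncr_le {a s : ℝ} (ha : a ≤ 1) (hs : 0 < s) :
    |rpowIncr a s| ≤ |a| * s ^ (a - 1) := by
  have hderiv : ∀ x ∈ Icc s (1 + s), HasDerivWithinAt (· ^ a) (a * x ^ (a - 1)) (Icc s (1 + s)) x :=
    fun x hx => (hasDerivAt_rpow_const (Or.inl (hs.trans_le hx.1).ne')).hasDerivWithinAt
  have hbound : ∀ x ∈ Ico s (1 + s), ‖a * x ^ (a - 1)‖ ≤ |a| * s ^ (a - 1) := fun x hx => by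
    rw [norm_mul, norm_eq_abs, norm_eq_abs, abs_of_pos (rpow_pos_of_pos (hs.trans_le hx.1) _)]
    exact mul_le_mul_of_nonneg_left (rpow_le_rpow_of_nonpos hs hx.1 (by linarith)) (abs_nonneg a)
  simpa [rpowIncr] using norm_image_sub_le_of_norm_deriv_le_segment' hderiv hbound (1 + s)
    (right_mem_Icc.2 (by linarith))

theorem isBigO_rpowIncr_nhdsGT_zero {a : ℝ} (ha : a ≤ 1) :
    rpowIncr a =O[𝓝[>] 0] (· ^ (-|a|)) := by
  refine IsBigO.of_bound 3 ?_
  filter_upwards [Ioc_mem_nhdsGT one_pos] with s hs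
  rw [norm_eq_abs, norm_eq_abs, abs_of_pos (rpow_pos_of_pos hs.1 _)]
  exact abs_rpowIncr_le_of_le_one ha hs.1 hs.2

theorem isBigO_rpowIncr_atTop {a : ℝ} (ha : a ≤ 1) : rpowIncr a =O[atTop] (· ^ (a - 1)) := by
  refine IsBigO.of_bound |a| ?_
  filter_upwards [Ioi_mem_atTop 0] with s hs
  rw [norm_eq_abs, norm_eq_abs, abs_of_pos (rpow_pos_of_pos hs _)]
  exact abs_rpowIncr_le ha hs

theorem integrableOn_rpowIncr_sq {a : ℝ} (ha : |a| < 1 / 2) :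
    IntegrableOn (fun s => rpowIncr a s ^ 2) (Ioi 0) := by
  obtain ⟨ha1, ha2⟩ := abs_lt.1 ha
  have hG0 := isBigO_rpowIncr_nhdsGT_zero (a := a) (by linarith)
  have hGtop := isBigO_rpowIncr_atTop (a := a) (by linarith)
  simp_rw [sq]
  exact integrableOn_Ioi_of_isBigO_rpow ((continuousOn_rpowIncr a).mul (continuousOn_rpowIncr a))
    (by linarith) (isBigO_mul_rpow_add self_mem_nhdsWithin hG0 hG0)
    (by linarith) (isBigO_mul_rpow_add (Ioi_mem_atTop 0) hGtop hGtop)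

theorem integrableOn_one_add_rpow_mul_rpowIncr {a : ℝ} (ha1 : -1 < a) (ha2 : a < 1 / 2) :
    IntegrableOn (fun s => (1 + s) ^ (a - 1) * rpowIncr a s) (Ioi 0) := by
  have hcont : ContinuousOn (fun s : ℝ => (1 + s) ^ (a - 1)) (Ioi 0) := fun s (hs : 0 < s) =>
    (ContinuousAt.rpow_const (f := fun s => 1 + s) (by fun_prop)
      (Or.inl (by positivity))).continuousWithinAt
  exact integrableOn_Ioi_of_isBigO_rpow (hcont.mul (continuousOn_rpowIncr a))
    (by rw [zero_add, neg_lt_neg_iff, abs_lt]; constructor <;> linarith)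
    (isBigO_mul_rpow_add self_mem_nhdsWithin (isBigO_one_add_rpow_nhdsGT_zero (a - 1))
      (isBigO_rpowIncr_nhdsGT_zero (by linarith)))
    (by linarith)
    (isBigO_mul_rpow_add (Ioi_mem_atTop 0) (isBigO_one_add_rpow_atTop (a - 1))
      (isBigO_rpowIncr_atTop (by linarith)))

theorem hasDerivAt_mul_rpowIncr_sq (a : ℝ) {s : ℝ} (hs : 0 < s) :
    HasDerivAt (fun s => s * rpowIncr a s ^ 2)
      ((2 * a + 1) * rpowIncr a s ^ 2 - 2 * a * ((1 + s) ^ (a - 1) * rpowIncr a s)) s := by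
  refine ((hasDerivAt_id' s).mul ((hasDerivAt_rpowIncr a hs).pow 2)).congr_deriv ?_
  have h1 : (1 + s) ≠ 0 := by positivity
  simp only [Pi.pow_apply, rpowIncr]
  rw [rpow_sub_one hs.ne', rpow_sub_one h1]
  field_simp
  ring

theorem two_mul_add_one_mul_integral_rpowIncr_sq {a : ℝ} (ha : |a| < 1 / 2) :
    (2 * a + 1) * ∫ s in Ioi 0, rpowIncr a s ^ 2
      = 2 * a * ∫ s in Ioi 0, (1 + s) ^ (a - 1) * rpowIncr a s := by
  obtain ⟨ha1, ha2⟩ := abs_lt.1 ha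
  have hG0 := isBigO_rpowIncr_nhdsGT_zero (a := a) (by linarith)
  have hGtop := isBigO_rpowIncr_atTop (a := a) (by linarith)
  have hsq0 := isBigO_mul_rpow_add self_mem_nhdsWithin hG0 hG0
  have hsqtop := isBigO_mul_rpow_add (Ioi_mem_atTop 0) hGtop hGtop
  have hcont : ContinuousWithinAt (fun s => s * rpowIncr a s ^ 2) (Ici 0) 0 := by
    refine continuousWithinAt_Ioi_iff_Ici.1 ?_
    rw [ContinuousWithinAt, zero_mul]
    simp_rw [sq]
    refine (isBigO_mul_rpow_add (p := 1) self_mem_nhdsWithin ?_ hsq0).trans_tendsto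
      (tendsto_rpow_nhdsGT_zero (by linarith))
    simpa using isBigO_refl (fun s : ℝ => s) _
  have htop : Tendsto (fun s => s * rpowIncr a s ^ 2) atTop (𝓝 0) := by
    simp_rw [sq]
    refine (isBigO_mul_rpow_add (p := 1) (Ioi_mem_atTop 0) ?_ hsqtop).trans_tendsto
      (tendsto_rpow_atTop_of_neg (by linarith))
    simpa using isBigO_refl (fun s : ℝ => s) _
  have hint := ((integrableOn_rpowIncr_sq ha).const_mul (2 * a + 1)).sub
    ((integrableOn_one_add_rpow_mul_rpowIncr (by linarith) ha2).const_mul (2 * a))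
  have h := integral_Ioi_of_hasDerivAt_of_tendsto hcont
    (fun s hs => hasDerivAt_mul_rpowIncr_sq a hs) hint htop
  rw [integral_sub ((integrableOn_rpowIncr_sq ha).const_mul _)
    ((integrableOn_one_add_rpow_mul_rpowIncr (by linarith) ha2).const_mul _),
    integral_const_mul, integral_const_mul] at h
  simpa [sub_eq_zero] using h

theorem two_mul_integral_one_add_rpow_mul_rpowIncr_of_neg {a : ℝ} (ha1 : -(1 / 2) < a)
    (ha0 : a < 0) :
    2 * a * ∫ s in Ioi 0, (1 + s) ^ (a - 1) * rpowIncr a s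
      = Gamma (a + 1) * Gamma (1 - 2 * a) / Gamma (1 - a) - 1 := by
  have hq : 0 < -(2 * a) := by linarith
  have hsplit : ∀ s ∈ Ioi (0 : ℝ), (1 + s) ^ (a - 1) * rpowIncr a s
      = s ^ ((1 : ℝ) - 1) * (1 + s) ^ (-(1 + -(2 * a)))
        - s ^ (a + 1 - 1) * (1 + s) ^ (-(a + 1 + -(2 * a))) := fun s (hs : 0 < s) => by
    simp only [rpowIncr, sub_self, rpow_zero, one_mul, add_sub_cancel_right]
    rw [mul_sub, ← rpow_add (by positivity), show -(1 + -(2 * a)) = a - 1 + a by ring,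
      show -(a + 1 + -(2 * a)) = a - 1 by ring, mul_comm]
  rw [setIntegral_congr_fun measurableSet_Ioi hsplit,
    integral_sub (integrableOn_rpow_mul_one_add_rpow_neg one_pos hq)
      (integrableOn_rpow_mul_one_add_rpow_neg (p := a + 1) (by linarith) hq),
    integral_rpow_mul_one_add_rpow_neg one_pos hq,
    integral_rpow_mul_one_add_rpow_neg (p := a + 1) (by linarith) hq,
    show (1 : ℝ) + -(2 * a) = 1 - 2 * a by ring, show 1 - 2 * a = -(2 * a) + 1 by ring,
    Gamma_add_one hq.ne', Gamma_one,
    show a + 1 + -(2 * a) = 1 - a by ring]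
  have : 0 < Gamma (-(2 * a)) := Gamma_pos_of_pos hq
  have : 0 < Gamma (1 - a) := Gamma_pos_of_pos (by linarith)
  have : a ≠ 0 := ha0.ne
  field_simp
  ring

theorem two_mul_integral_one_add_rpow_mul_rpowIncr_of_pos {a : ℝ} (ha0 : 0 < a)
    (ha2 : a < 1 / 2) :
    2 * a * ∫ s in Ioi 0, (1 + s) ^ (a - 1) * rpowIncr a s
      = Gamma (a + 1) * Gamma (1 - 2 * a) / Gamma (1 - a) - 1 := by
  have hq : 0 < 1 - 2 * a := by linarith
  have hbeta : ∀ s : ℝ, s ^ (a - 1) * (1 + s) ^ (-(a + (1 - 2 * a)))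
      = s ^ (a - 1) * (1 + s) ^ (a - 1) := fun s => by ring_nf
  have hderiv : ∀ s ∈ Ioi (0 : ℝ), HasDerivAt (fun s => (1 + s) ^ a * rpowIncr a s)
      (2 * a * ((1 + s) ^ (a - 1) * rpowIncr a s)
        - a * (s ^ (a - 1) * (1 + s) ^ (-(a + (1 - 2 * a))))) s := fun s (hs : 0 < s) => by
    have h1 : HasDerivAt (fun s : ℝ => (1 + s) ^ a) (a * (1 + s) ^ (a - 1)) s := by
      simpa using ((hasDerivAt_id' s).const_add 1).rpow_const (p := a) (Or.inl (by positivity))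
    refine (h1.mul (hasDerivAt_rpowIncr a hs)).congr_deriv ?_
    have h1 : (1 + s) ≠ 0 := by positivity
    rw [hbeta, rpowIncr, rpow_sub_one hs.ne', rpow_sub_one h1]
    field_simp
    ring
  have hcont : ContinuousWithinAt (fun s => (1 + s) ^ a * rpowIncr a s) (Ici 0) 0 := by
    refine ContinuousAt.continuousWithinAt ?_
    have hpow : ContinuousAt (fun s : ℝ => (1 + s) ^ a) 0 :=
      ContinuousAt.rpow_const (f := fun s => 1 + s) (by fun_prop) (Or.inr ha0.le)
    exact hpow.mul (hpow.sub (continuousAt_rpow_const 0 a (Or.inr ha0.le)))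
  have htop : Tendsto (fun s => (1 + s) ^ a * rpowIncr a s) atTop (𝓝 0) :=
    (isBigO_mul_rpow_add (Ioi_mem_atTop 0) (isBigO_one_add_rpow_atTop a)
      (isBigO_rpowIncr_atTop (by linarith))).trans_tendsto
      (tendsto_rpow_atTop_of_neg (by linarith))
  have hintk := integrableOn_one_add_rpow_mul_rpowIncr (a := a) (by linarith) ha2
  have hintB := integrableOn_rpow_mul_one_add_rpow_neg ha0 hq
  have h := integral_Ioi_of_hasDerivAt_of_tendsto hcont hderiv
    ((hintk.const_mul (2 * a)).sub (hintB.const_mul a)) htop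
  rw [integral_sub (hintk.const_mul _) (hintB.const_mul _), integral_const_mul,
    integral_const_mul, integral_rpow_mul_one_add_rpow_neg ha0 hq] at h
  have hφ0 : (1 + 0) ^ a * rpowIncr a 0 = 1 := by simp [rpowIncr, zero_rpow ha0.ne']
  rw [hφ0, show a + (1 - 2 * a) = 1 - a by ring] at h
  rw [Gamma_add_one ha0.ne']
  linear_combination h

theorem two_mul_integral_one_add_rpow_mul_rpowIncr {a : ℝ} (ha : |a| < 1 / 2) :
    2 * a * ∫ s in Ioi 0, (1 + s) ^ (a - 1) * rpowIncr a s
      = Gamma (a + 1) * Gamma (1 - 2 * a) / Gamma (1 - a) - 1 := by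
  obtain ⟨ha1, ha2⟩ := abs_lt.1 ha
  rcases lt_trichotomy a 0 with hneg | rfl | hpos
  · exact two_mul_integral_one_add_rpow_mul_rpowIncr_of_neg ha1 hneg
  · simp
  · exact two_mul_integral_one_add_rpow_mul_rpowIncr_of_pos hpos ha2

theorem integral_rpowIncr_sq {a : ℝ} (ha : |a| < 1 / 2) :
    ∫ s in Ioi 0, rpowIncr a s ^ 2
      = (Gamma (a + 1) * Gamma (1 - 2 * a) / Gamma (1 - a) - 1) / (2 * a + 1) := by
  rw [eq_div_iff (by linarith [abs_lt.1 ha]), mul_comm, two_mul_add_one_mul_integral_rpowIncr_sq ha,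
    two_mul_integral_one_add_rpow_mul_rpowIncr ha]

theorem integral_sq_kernel_eq_integral_rpowIncr_sq_add {a : ℝ} (ha : -(1 / 2) < a)
    (hG : IntegrableOn (fun s => rpowIncr a s ^ 2) (Ioi 0)) :
    ∫ u : ℝ, ((if u ≤ 1 then (1 - u) ^ a else 0) - (if u ≤ 0 then (-u) ^ a else 0)) ^ 2
      = (∫ s in Ioi 0, rpowIncr a s ^ 2) + 1 / (2 * a + 1) := by
  set f : ℝ → ℝ :=
    fun u => ((if u ≤ 1 then (1 - u) ^ a else 0) - (if u ≤ 0 then (-u) ^ a else 0)) ^ 2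
  have hleft : EqOn f (fun u => rpowIncr a (-u) ^ 2) (Iic 0) := fun u (hu : u ≤ 0) => by
    simp [f, hu, hu.trans zero_le_one, rpowIncr, sub_eq_add_neg]
  have hright : EqOn f ((Iic 1).indicator fun u => (1 - u) ^ (2 * a)) (Ioi 0) :=
    fun u (hu : 0 < u) => by
      by_cases hu1 : u ≤ 1
      · simp [f, hu1, hu.not_ge, ← rpow_mul_natCast (sub_nonneg.2 hu1), mul_comm]
      · simp [f, hu1, (zero_lt_one.trans (not_le.1 hu1)).not_ge]
  have hIcc : IntegrableOn (fun u : ℝ => (1 - u) ^ (2 * a)) (Ioc 0 1) := by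
    have := (intervalIntegral.intervalIntegrable_rpow' (a := 0) (b := 1)
      (show -1 < 2 * a by linarith)).comp_sub_left 1
    norm_num at this
    exact (intervalIntegrable_iff_integrableOn_Ioc_of_le zero_le_one).1 this.symm
  have hIic : IntegrableOn f (Iic 0) := by
    refine IntegrableOn.congr_fun ?_ hleft.symm measurableSet_Iic
    have hG' := (integrableOn_Ici_iff_integrableOn_Ioi (f := fun s => rpowIncr a s ^ 2)).2 hG
    simpa [Function.comp_def] using
      ((Measure.measurePreserving_neg volume).integrableOn_comp_preimage
        (Homeomorph.neg ℝ).measurableEmbedding).2 hG'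
  have hIoi : IntegrableOn f (Ioi 0) := by
    refine IntegrableOn.congr_fun ?_ hright.symm measurableSet_Ioi
    rwa [integrableOn_indicator_iff measurableSet_Iic, inter_comm, Ioi_inter_Iic]
  rw [← intervalIntegral.integral_Iic_add_Ioi hIic hIoi,
    setIntegral_congr_fun measurableSet_Iic hleft, setIntegral_congr_fun measurableSet_Ioi hright,
    integral_comp_neg_Iic 0 (fun s => rpowIncr a s ^ 2), neg_zero,
    setIntegral_indicator measurableSet_Iic, Ioi_inter_Iic, ← intervalIntegral.integral_of_le
    zero_le_one, intervalIntegral.integral_comp_sub_left (fun u => u ^ (2 * a)),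
    integral_rpow (Or.inl (by linarith))]
  norm_num [zero_rpow (show 2 * a + 1 ≠ 0 by linarith)]

theorem sin_pi_mul_ne_zero_of_abs_lt_one {z : ℝ} (hz : |z| < 1) (hz0 : z ≠ 0) :
    sin (π * z) ≠ 0 := by
  obtain ⟨hz1, hz2⟩ := abs_lt.1 hz
  rw [Ne, sin_eq_zero_iff_of_lt_of_lt (by nlinarith [pi_pos]) (by nlinarith [pi_pos])]
  exact mul_ne_zero pi_ne_zero hz0

theorem Gamma_one_add_mul_Gamma_one_sub_mul_sin {z : ℝ} (hz : |z| < 1) :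
    Gamma (1 + z) * Gamma (1 - z) * sin (π * z) = π * z := by
  rcases eq_or_ne z 0 with rfl | hz0
  · simp
  rw [add_comm, Gamma_add_one hz0, mul_assoc z, Gamma_mul_Gamma_one_sub, mul_assoc,
    div_mul_cancel₀ _ (sin_pi_mul_ne_zero_of_abs_lt_one hz hz0), mul_comm]

theorem Gamma_div_eq_sq_div_cos {a : ℝ} (ha : |a| < 1 / 2) :
    Gamma (a + 1) * Gamma (1 - 2 * a) / Gamma (1 - a) / (2 * a + 1)
      = Gamma (a + 1) ^ 2 / (cos (π * a) * Gamma (2 * a + 2)) := by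
  obtain ⟨ha1, ha2⟩ := abs_lt.1 ha
  rcases eq_or_ne a 0 with rfl | ha0
  · simp
  have hcos : 0 < cos (π * a) := cos_pos_of_mem_Ioo ⟨by nlinarith [pi_pos], by nlinarith [pi_pos]⟩
  have ha' : |a| < 1 := ha.trans (by norm_num)
  have h1 := Gamma_one_add_mul_Gamma_one_sub_mul_sin ha'
  have h2 := Gamma_one_add_mul_Gamma_one_sub_mul_sin (z := 2 * a)
    (by rw [abs_mul, abs_two]; linarith)
  rw [show π * (2 * a) = 2 * (π * a) by ring, sin_two_mul] at h2
  have key : cos (π * a) * Gamma (1 + 2 * a) * Gamma (1 - 2 * a) = Gamma (1 + a) * Gamma (1 - a) :=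
    mul_left_cancel₀ (mul_ne_zero two_ne_zero (sin_pi_mul_ne_zero_of_abs_lt_one ha' ha0))
      (by linear_combination h2 - 2 * h1)
  have hΓ2 : Gamma (2 * a + 2) = (2 * a + 1) * Gamma (1 + 2 * a) := by
    rw [show 2 * a + 2 = (2 * a + 1) + 1 by ring, Gamma_add_one (by linarith), add_comm 1]
  have : 0 < Gamma (1 - a) := Gamma_pos_of_pos (by linarith)
  have : 0 < Gamma (1 + 2 * a) := Gamma_pos_of_pos (by linarith)
  have : 0 < 2 * a + 1 := by linarith
  rw [hΓ2, add_comm a 1, div_div, div_eq_div_iff (by positivity) (by positivity)]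
  linear_combination (2 * a + 1) * Gamma (1 + a) * key

theorem integral_sq_fBm_kernel (H : ℝ) (hH : H ∈ Set.Ioo (0 : ℝ) 1) :
    ∫ u : ℝ, ((if u ≤ 1 then (1 - u) ^ (H - 1/2) else 0) -
        (if u ≤ 0 then (-u) ^ (H - 1/2) else 0))^2 =
      (Real.Gamma (H + 1/2))^2 / (Real.sin (Real.pi * H) * Real.Gamma (2*H + 1)) := by
  have ha : |H - 1 / 2| < 1 / 2 := abs_lt.2 ⟨by linarith [hH.1], by linarith [hH.2]⟩
  rw [integral_sq_kernel_eq_integral_rpowIncr_sq_add (by linarith [hH.1])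
      (integrableOn_rpowIncr_sq ha),
    integral_rpowIncr_sq ha, ← add_div, sub_add_cancel, Gamma_div_eq_sq_div_cos ha,
    show π * (H - 1 / 2) = π * H - π / 2 by ring, cos_sub_pi_div_two,
    show H - 1 / 2 + 1 = H + 1 / 2 by ring, show 2 * (H - 1 / 2) + 2 = 2 * H + 1 by ring]
end

section
/- For H ∈ (0,1) and T > 0, the variance of the fractional Ornstein–Uhlenbeck process, given by the integral T² [Γ(H+1/2)]² ∫_ℝ |2πω|^{1−2H} / (1+4π²ω²T²) dω, equals T^{2H} [Γ(H+1/2)]² / (2 sin(πH)). -/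
/-!
Rescaling `ω` by `2πT` pulls out the factor `T ^ (2H - 1) / (2πT)` and leaves
`∫ |x| ^ (1 - 2H) / (1 + x²)`. By evenness and the substitution `t = x²` this is
`∫₀^∞ t ^ (-H) / (1 + t) dt`, which `t = x / (1 - x)` turns into the Beta integral
`B(1 - H, H) = Γ(1 - H) Γ(H) = π / sin (πH)` (Euler's reflection formula).
-/

open MeasureTheory Real Set

theorem integral_rpow_mul_one_sub_rpow_eq_Gamma_mul_div {a b : ℝ} (ha : 0 < a) (hb : 0 < b) :
    ∫ x in (0:ℝ)..1, x ^ (a - 1) * (1 - x) ^ (b - 1) = Gamma a * Gamma b / Gamma (a + b) := by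
  apply Complex.ofReal_injective
  have hbeta := Complex.betaIntegral_eq_Gamma_mul_div a b (by simpa) (by simpa)
  push_cast [← Complex.Gamma_ofReal, ← hbeta, Complex.betaIntegral,
    ← intervalIntegral.integral_ofReal]
  refine intervalIntegral.integral_congr fun x hx => ?_
  rw [uIcc_of_le zero_le_one] at hx
  push_cast [Complex.ofReal_cpow hx.1, Complex.ofReal_cpow (sub_nonneg.2 hx.2)]
  rfl

theorem image_div_one_sub_Ioo : (fun x : ℝ => x / (1 - x)) '' Ioo 0 1 = Ioi 0 := by
  refine Subset.antisymm (image_subset_iff.2 fun x hx => div_pos hx.1 (sub_pos.2 hx.2))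
    fun t (ht : 0 < t) =>
      ⟨t / (1 + t), ⟨by positivity, (div_lt_one (by positivity)).2 (by linarith)⟩, ?_⟩
  field_simp
  ring

theorem integral_Ioi_rpow_mul_one_add_rpow_neg (a b : ℝ) :
    ∫ t in Ioi 0, t ^ (a - 1) * (1 + t) ^ (-(a + b)) =
      ∫ x in (0:ℝ)..1, x ^ (a - 1) * (1 - x) ^ (b - 1) := by
  have hderiv : ∀ x ∈ Ioo (0:ℝ) 1,
      HasDerivWithinAt (fun x => x / (1 - x)) (((1 - x) ^ 2)⁻¹) (Ioo 0 1) x := by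
    intro x hx
    have h1x : 1 - x ≠ 0 := (sub_pos.2 hx.2).ne'
    refine (((hasDerivAt_id' x).div ((hasDerivAt_id' x).const_sub 1) h1x).congr_deriv
      ?_).hasDerivWithinAt
    field_simp
    ring
  have hinj : InjOn (fun x : ℝ => x / (1 - x)) (Ioo 0 1) := by
    intro x hx y hy hxy
    have := (sub_pos.2 hx.2).ne'
    have := (sub_pos.2 hy.2).ne'
    field_simp at hxy
    linarith
  rw [← image_div_one_sub_Ioo,
    integral_image_eq_integral_abs_deriv_smul measurableSet_Ioo hderiv hinj,
    intervalIntegral.integral_of_le zero_le_one, integral_Ioc_eq_integral_Ioo]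
  refine setIntegral_congr_fun measurableSet_Ioo fun x ⟨hx0, hx1⟩ => ?_
  have hu : 0 < 1 - x := sub_pos.2 hx1
  have hsum : 1 + x / (1 - x) = (1 - x)⁻¹ := by field_simp; ring
  have hsplit : (1 - x) ^ (a + b) = (1 - x) ^ (a - 1) * (1 - x) ^ (b - 1) * (1 - x) ^ 2 := by
    rw [← rpow_add hu, ← rpow_natCast, ← rpow_add hu]
    ring_nf
  have := (rpow_pos_of_pos hu (a - 1)).ne'
  simp only [smul_eq_mul]
  rw [abs_of_pos (by positivity), hsum, div_rpow hx0.le hu.le, inv_rpow hu.le, rpow_neg hu.le,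
    inv_inv, hsplit]
  field_simp

theorem integral_Ioi_rpow_div_one_add_eq_pi_div_sin {a : ℝ} (ha0 : 0 < a) (ha1 : a < 1) :
    ∫ t in Ioi 0, t ^ (a - 1) / (1 + t) = π / sin (π * a) := by
  have h := integral_Ioi_rpow_mul_one_add_rpow_neg a (1 - a)
  rw [integral_rpow_mul_one_sub_rpow_eq_Gamma_mul_div ha0 (sub_pos.2 ha1), add_sub_cancel,
    Gamma_one, div_one, Gamma_mul_Gamma_one_sub] at h
  simpa only [rpow_neg_one, div_eq_mul_inv] using h

theorem integral_Ioi_rpow_div_one_add_rpow_eq_pi_div_sin {p a : ℝ} (hp : 0 < p) (ha0 : 0 < a)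
    (ha1 : a < 1) :
    ∫ x in Ioi 0, x ^ (p * a - 1) / (1 + x ^ p) = π / (p * sin (π * a)) := by
  have h : ∫ x in Ioi 0, p * (x ^ (p * a - 1) / (1 + x ^ p)) = π / sin (π * a) := by
    rw [← integral_Ioi_rpow_div_one_add_eq_pi_div_sin ha0 ha1,
      ← integral_comp_rpow_Ioi_of_pos hp (g := fun t => t ^ (a - 1) / (1 + t))]
    refine setIntegral_congr_fun measurableSet_Ioi fun x (hx : 0 < x) => ?_
    have hexp : x ^ (p * a - 1) = x ^ (p - 1) * x ^ (p * (a - 1)) := by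
      rw [← rpow_add hx]
      ring_nf
    rw [smul_eq_mul, ← rpow_mul hx.le, hexp]
    ring
  rw [integral_const_mul] at h
  rw [div_mul_eq_div_div_swap, ← h, mul_div_cancel_left₀ _ hp.ne']

theorem integral_abs_rpow_div_one_add_sq_eq_pi_div_sin {a : ℝ} (ha0 : 0 < a) (ha1 : a < 1) :
    ∫ x, |x| ^ (2 * a - 1) / (1 + x ^ 2) = π / sin (π * a) := by
  have h := integral_Ioi_rpow_div_one_add_rpow_eq_pi_div_sin two_pos ha0 ha1
  simp only [rpow_two] at h
  calc ∫ x, |x| ^ (2 * a - 1) / (1 + x ^ 2)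
      = ∫ x, (fun y => y ^ (2 * a - 1) / (1 + y ^ 2)) |x| := by simp only [sq_abs]
    _ = π / sin (π * a) := by
      rw [integral_comp_abs (f := fun y => y ^ (2 * a - 1) / (1 + y ^ 2)), h]
      field_simp

theorem fOU_variance (H T : ℝ) (hH : H ∈ Set.Ioo (0 : ℝ) 1) (hT : 0 < T) :
    T^2 * (Real.Gamma (H + 1/2))^2 *
        ∫ ω : ℝ, |2 * Real.pi * ω| ^ (1 - 2*H) / (1 + 4 * Real.pi^2 * ω^2 * T^2) =
      T ^ (2*H) * (Real.Gamma (H + 1/2))^2 / (2 * Real.sin (Real.pi * H)) := by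
  obtain ⟨hH0, hH1⟩ := hH
  have hc : 0 < 2 * π * T := by positivity
  have hscale : ∀ ω : ℝ, |2 * π * ω| ^ (1 - 2 * H) / (1 + 4 * π ^ 2 * ω ^ 2 * T ^ 2) =
      T ^ (2 * H - 1) * (|2 * π * T * ω| ^ (2 * (1 - H) - 1) / (1 + (2 * π * T * ω) ^ 2)) := by
    intro ω
    have hone : T ^ (2 * H - 1) * T ^ (1 - 2 * H) = 1 := by
      rw [← rpow_add hT]
      norm_num
    rw [show 2 * π * T * ω = T * (2 * π * ω) by ring, abs_mul T, abs_of_pos hT,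
      mul_rpow hT.le (abs_nonneg _), show 2 * (1 - H) - 1 = 1 - 2 * H by ring, mul_div_assoc',
      ← mul_assoc, hone, one_mul]
    ring
  have hrescaled :
      ∫ ω : ℝ, |2 * π * T * ω| ^ (2 * (1 - H) - 1) / (1 + (2 * π * T * ω) ^ 2) =
        (2 * π * T)⁻¹ * (π / sin (π * H)) := by
    rw [Measure.integral_comp_mul_left (fun x => |x| ^ (2 * (1 - H) - 1) / (1 + x ^ 2)),
      integral_abs_rpow_div_one_add_sq_eq_pi_div_sin (by linarith) (by linarith), mul_one_sub,
      sin_pi_sub, abs_of_pos (inv_pos.2 hc), smul_eq_mul]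
  have hTpow : T * T ^ (2 * H - 1) = T ^ (2 * H) := by
    rw [mul_comm, ← rpow_add_one hT.ne']
    ring_nf
  simp_rw [hscale, integral_const_mul, hrescaled]
  rw [← hTpow]
  field_simp
end

section
/- For any τ > 0, ∫₀^∞ [ (1/2) e^{−(τ+h)/T} − sgn(τ−h)·(1/2) e^{−|τ−h|/T} ] h^{−1} dh is a well-defined (convergent) integral, and as τ → 0⁺ it is asymptotically equivalent to ln(1/τ). -/
open MeasureTheory Real Filter

/-!
For `h > τ` the integrand equals `cosh (τ/T) · e^{-h/T} / h`, while on `(0, τ)` it is bounded by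
`1/T` because `exp` is `1`-Lipschitz on `(-∞, 0]`. Hence the integral is
`cosh (τ/T) · ∫_τ^∞ e^{-h/T} / h dh + O(τ)`, and comparing with `∫_τ^1 dh / h = log (1/τ)` shows
`∫_τ^∞ e^{-h/T} / h dh = log (1/τ) + O(1)`.
-/

open Set Topology Asymptotics

lemma Asymptotics.isLittleO_of_abs_le_of_tendsto_atTop {α : Type*} {l : Filter α} {u v : α → ℝ}
    (hv : Tendsto v l atTop) {C : ℝ} (hu : ∀ᶠ x in l, |u x| ≤ C) : u =o[l] v :=
  (IsBigO.of_bound C (by simpa using hu) : u =O[l] fun _ ↦ (1 : ℝ)).trans_isLittleO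
    ((isLittleO_one_left_iff ℝ).2 (tendsto_abs_atTop_atTop.comp hv))

lemma Asymptotics.IsEquivalent.of_abs_sub_le {α : Type*} {l : Filter α} {u v : α → ℝ}
    (hv : Tendsto v l atTop) {C : ℝ} (huv : ∀ᶠ x in l, |u x - v x| ≤ C) : u ~[l] v :=
  isLittleO_of_abs_le_of_tendsto_atTop hv huv

lemma tendsto_log_one_div_nhdsGT_zero : Tendsto (fun τ : ℝ ↦ log (1 / τ)) (𝓝[>] 0) atTop :=
  (tendsto_neg_atBot_atTop.comp tendsto_log_nhdsGT_zero).congr fun τ ↦ by simp [log_inv]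

lemma exp_sub_exp_le_of_le_of_nonpos {a b : ℝ} (hab : a ≤ b) (hb : b ≤ 0) :
    exp b - exp a ≤ b - a := by
  have hgap : 1 - exp (a - b) ≤ b - a := by linarith [add_one_le_exp (a - b)]
  have hgap_nonneg : 0 ≤ 1 - exp (a - b) := by
    linarith [exp_le_one_iff.2 (sub_nonpos.2 hab)]
  have hexp_b : exp b ≤ 1 := exp_le_one_iff.2 hb
  calc exp b - exp a = exp b * (1 - exp (a - b)) := by rw [exp_sub]; field_simp
    _ ≤ 1 * (b - a) := mul_le_mul hexp_b hgap hgap_nonneg zero_le_one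
    _ = b - a := one_mul _

lemma abs_exp_neg_div_sub_one_div_le {T h : ℝ} (hT : 0 < T) (hh : 0 < h) :
    |(exp (-h / T) - 1) / h| ≤ 1 / T := by
  have hneg : -h / T ≤ 0 := div_nonpos_of_nonpos_of_nonneg (by linarith) hT.le
  have hlip := exp_sub_exp_le_of_le_of_nonpos hneg le_rfl
  rw [exp_zero] at hlip
  rw [abs_div, abs_of_pos hh, abs_sub_comm, abs_of_nonneg (by linarith [exp_le_one_iff.2 hneg]),
    div_le_iff₀ hh]
  calc 1 - exp (-h / T) ≤ 0 - -h / T := hlip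
    _ = 1 / T * h := by ring

lemma integrableOn_exp_neg_div_div_Ioi {T a : ℝ} (hT : 0 < T) (ha : 0 < a) :
    IntegrableOn (fun h ↦ exp (-h / T) / h) (Ioi a) := by
  refine Integrable.mono' ((exp_neg_integrableOn_Ioi a (one_div_pos.2 hT)).const_mul a⁻¹)
    ((continuousOn_of_forall_continuousAt fun h hh ↦ ?_).aestronglyMeasurable measurableSet_Ioi)
    ((ae_restrict_iff' measurableSet_Ioi).2 (ae_of_all _ fun h hh ↦ ?_))
  · exact ((continuous_neg.div_const T).rexp.continuousAt).div continuousAt_id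
      (ha.trans hh).ne'
  · have h0 : 0 < h := ha.trans hh
    rw [norm_div, norm_of_nonneg (exp_pos _).le, norm_of_nonneg h0.le, div_eq_inv_mul,
      show -(1 / T) * h = -h / T by ring]
    gcongr
    exact hh.le

lemma abs_integral_exp_neg_div_div_sub_log_le {T τ : ℝ} (hT : 0 < T) (hτ0 : 0 < τ)
    (hτ1 : τ ≤ 1) :
    |(∫ h in Ioi τ, exp (-h / T) / h) - log (1 / τ)| ≤
      1 / T + |∫ h in Ioi 1, exp (-h / T) / h| := by
  have hcont : ∀ f : ℝ → ℝ, Continuous f → IntervalIntegrable (fun h ↦ f h / h) volume τ 1 :=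
    fun f hf ↦ (hf.continuousOn.div continuousOn_id fun h hh ↦
      (hτ0.trans_le (by rw [uIcc_of_le hτ1] at hh; exact hh.1)).ne').intervalIntegrable
  have hsplit : (∫ h in Ioi τ, exp (-h / T) / h) - log (1 / τ) =
      (∫ h in τ..1, (exp (-h / T) - 1) / h) + ∫ h in Ioi 1, exp (-h / T) / h := by
    rw [← intervalIntegral.integral_interval_add_Ioi (integrableOn_exp_neg_div_div_Ioi hT hτ0)
      (integrableOn_exp_neg_div_div_Ioi hT one_pos), ← integral_one_div_of_pos hτ0 one_pos]
    simp only [sub_div]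
    rw [intervalIntegral.integral_sub (hcont _ (by fun_prop)) (hcont _ continuous_const)]
    ring
  have hnear : ‖∫ h in τ..1, (exp (-h / T) - 1) / h‖ ≤ 1 / T * |1 - τ| :=
    intervalIntegral.norm_integral_le_of_norm_le_const fun h hh ↦
      abs_exp_neg_div_sub_one_div_le hT (hτ0.trans (by rw [uIoc_of_le hτ1] at hh; exact hh.1))
  rw [norm_eq_abs, abs_of_nonneg (by linarith : 0 ≤ 1 - τ)] at hnear
  rw [hsplit]
  refine (abs_add_le _ _).trans (add_le_add_left ?_ _)
  exact hnear.trans (mul_le_of_le_one_right (one_div_pos.2 hT).le (by linarith))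

lemma isEquivalent_integral_exp_neg_div_div_log {T : ℝ} (hT : 0 < T) :
    (fun τ ↦ ∫ h in Ioi τ, exp (-h / T) / h) ~[𝓝[>] 0] fun τ ↦ log (1 / τ) :=
  .of_abs_sub_le tendsto_log_one_div_nhdsGT_zero <| by
    filter_upwards [Ioc_mem_nhdsGT one_pos] with τ hτ
    exact abs_integral_exp_neg_div_div_sub_log_le hT hτ.1 hτ.2

noncomputable def covIntegrand (T τ h : ℝ) : ℝ :=
  ((1/2) * exp (-(τ + h)/T) - Real.sign (τ - h) * (1/2) * exp (-|τ - h|/T)) / h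

section covIntegrand

variable {T τ h : ℝ}

lemma covIntegrand_of_lt (hτh : τ < h) :
    covIntegrand T τ h = cosh (τ / T) * (exp (-h / T) / h) := by
  rw [covIntegrand, Real.sign_of_neg (by linarith), abs_of_neg (by linarith), cosh_eq,
    show -(τ + h) / T = -(τ / T) + -h / T by ring, show -(-(τ - h)) / T = τ / T + -h / T by ring,
    exp_add, exp_add]
  ring

lemma covIntegrand_of_pos_of_lt (h0 : 0 < h) (hhτ : h < τ) :
    covIntegrand T τ h = (exp (-(τ + h) / T) - exp (-(τ - h) / T)) / (2 * h) := by
  rw [covIntegrand, Real.sign_of_pos (by linarith), abs_of_pos (by linarith)]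
  field_simp

lemma abs_covIntegrand_le (hT : 0 < T) (h0 : 0 < h) (hhτ : h < τ) :
    |covIntegrand T τ h| ≤ 1 / T := by
  have hle : -(τ + h) / T ≤ -(τ - h) / T := by gcongr; linarith
  have hlip := exp_sub_exp_le_of_le_of_nonpos hle
    (div_nonpos_of_nonpos_of_nonneg (by linarith) hT.le)
  rw [covIntegrand_of_pos_of_lt h0 hhτ, abs_div, abs_sub_comm,
    abs_of_nonneg (by linarith [exp_le_exp.2 hle]), abs_of_pos (by positivity),
    div_le_iff₀ (by positivity)]
  calc exp (-(τ - h) / T) - exp (-(τ + h) / T) ≤ -(τ - h) / T - -(τ + h) / T := hlip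
    _ = 1 / T * (2 * h) := by ring

lemma integrableOn_covIntegrand_Ioc (hT : 0 < T) :
    IntegrableOn (covIntegrand T τ) (Ioc 0 τ) := by
  have hcont : ContinuousOn (fun h ↦ (exp (-(τ + h) / T) - exp (-(τ - h) / T)) / (2 * h))
      (Ioo 0 τ) :=
    ContinuousOn.div (by fun_prop) (by fun_prop) fun h hh ↦ (mul_pos two_pos hh.1).ne'
  rw [integrableOn_Ioc_iff_integrableOn_Ioo]
  exact Integrable.mono' (integrableOn_const measure_Ioo_lt_top.ne (C := 1 / T))
    ((hcont.congr fun h hh ↦ covIntegrand_of_pos_of_lt hh.1 hh.2).aestronglyMeasurable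
      measurableSet_Ioo)
    ((ae_restrict_iff' measurableSet_Ioo).2
      (ae_of_all _ fun h hh ↦ abs_covIntegrand_le hT hh.1 hh.2))

lemma abs_integral_covIntegrand_Ioc_le (hT : 0 < T) (hτ : 0 < τ) :
    |∫ h in Ioc 0 τ, covIntegrand T τ h| ≤ τ / T := by
  rw [integral_Ioc_eq_integral_Ioo, ← norm_eq_abs]
  calc ‖∫ h in Ioo 0 τ, covIntegrand T τ h‖ ≤ 1 / T * volume.real (Ioo 0 τ) :=
        norm_setIntegral_le_of_norm_le_const measure_Ioo_lt_top
          fun h hh ↦ abs_covIntegrand_le hT hh.1 hh.2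
    _ = τ / T := by rw [volume_real_Ioo_of_le hτ.le]; ring

lemma integrableOn_covIntegrand_Ioi_self (hT : 0 < T) (hτ : 0 < τ) :
    IntegrableOn (covIntegrand T τ) (Ioi τ) :=
  (integrableOn_congr_fun (fun _ hh ↦ covIntegrand_of_lt hh) measurableSet_Ioi).2
    ((integrableOn_exp_neg_div_div_Ioi hT hτ).const_mul _)

lemma integrableOn_covIntegrand (hT : 0 < T) (hτ : 0 < τ) :
    IntegrableOn (covIntegrand T τ) (Ioi 0) :=
  Ioc_union_Ioi_eq_Ioi hτ.le ▸
    (integrableOn_covIntegrand_Ioc hT).union (integrableOn_covIntegrand_Ioi_self hT hτ)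

lemma integral_covIntegrand_eq (hT : 0 < T) (hτ : 0 < τ) :
    ∫ h in Ioi 0, covIntegrand T τ h =
      (∫ h in Ioc 0 τ, covIntegrand T τ h) + cosh (τ / T) * ∫ h in Ioi τ, exp (-h / T) / h := by
  rw [← Ioc_union_Ioi_eq_Ioi hτ.le, setIntegral_union Ioc_disjoint_Ioi_same measurableSet_Ioi
    (integrableOn_covIntegrand_Ioc hT) (integrableOn_covIntegrand_Ioi_self hT hτ),
    setIntegral_congr_fun measurableSet_Ioi (fun _ hh ↦ covIntegrand_of_lt hh),
    integral_const_mul]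

end covIntegrand

lemma isEquivalent_integral_covIntegrand_log {T : ℝ} (hT : 0 < T) :
    (fun τ ↦ ∫ h in Ioi 0, covIntegrand T τ h) ~[𝓝[>] 0] fun τ ↦ log (1 / τ) := by
  have hcosh : (fun τ ↦ cosh (τ / T)) ~[𝓝[>] 0] Function.const ℝ (1 : ℝ) :=
    (isEquivalent_const_iff_tendsto one_ne_zero).2 <| by
      simpa using ((by fun_prop : Continuous fun τ ↦ cosh (τ / T)).tendsto 0).mono_left
        nhdsWithin_le_nhds
  have hfar : (fun τ ↦ cosh (τ / T) * ∫ h in Ioi τ, exp (-h / T) / h) ~[𝓝[>] 0]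
      fun τ ↦ log (1 / τ) :=
    (hcosh.mul (isEquivalent_integral_exp_neg_div_div_log hT)).congr_right
      (Eventually.of_forall fun _ ↦ one_mul _)
  have hnear : (fun τ ↦ ∫ h in Ioc 0 τ, covIntegrand T τ h) =o[𝓝[>] 0] fun τ ↦ log (1 / τ) :=
    isLittleO_of_abs_le_of_tendsto_atTop tendsto_log_one_div_nhdsGT_zero <| by
      filter_upwards [Ioc_mem_nhdsGT one_pos] with τ hτ
      exact (abs_integral_covIntegrand_Ioc_le hT hτ.1).trans
        (div_le_div_of_nonneg_right hτ.2 hT.le)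
  refine (hfar.add_isLittleO hnear).congr_left ?_
  filter_upwards [self_mem_nhdsWithin] with τ hτ
  rw [Pi.add_apply, integral_covIntegrand_eq hT hτ, add_comm]

theorem covariance_H0_log_divergence (T : ℝ) (hT : 0 < T) :
    (∀ τ : ℝ, 0 < τ → IntegrableOn
        (fun h : ℝ => ((1/2) * Real.exp (-(τ + h)/T) -
          Real.sign (τ - h) * (1/2) * Real.exp (-|τ - h|/T)) / h) (Set.Ioi 0)) ∧
      Tendsto (fun τ : ℝ =>
          (∫ h in Set.Ioi (0:ℝ), ((1/2) * Real.exp (-(τ + h)/T) -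
            Real.sign (τ - h) * (1/2) * Real.exp (-|τ - h|/T)) / h) / Real.log (1/τ))
        (nhdsWithin 0 (Set.Ioi 0)) (nhds 1) := by
  refine ⟨fun τ hτ ↦ integrableOn_covIntegrand hT hτ, ?_⟩
  have hlog_ne : ∀ᶠ τ in 𝓝[>] (0 : ℝ), log (1 / τ) ≠ 0 :=
    tendsto_log_one_div_nhdsGT_zero.eventually_ne_atTop 0
  exact (isEquivalent_iff_tendsto_one hlog_ne).1 (isEquivalent_integral_covIntegrand_log hT)
end

section
/- For H ∈ (0,1/2), T > 0, and f(s) = e^{s/T} 1_{s≤0}, the function 𝒦_H(u) = 1_{u≤0} [ (−u)^{2H−1} − (2/T) ∫_u^0 e^{2s/T} (s−u)^{2H−1} ds ] satisfies ∫_ℝ 𝒦_H(u) du = 0. -/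
/-!
Write `x = -u`, `c = 2 / T` and `p = 2H - 1 ∈ (-1, 0)`. By the substitution `s = v - x`, the
kernel at `u = -x` is `x ^ p - c G(x)`, where `G(x) = ∫₀ˣ e^{-c(x-v)} v^p dv` is
`expSmoothing c p x`. Since `G' = x ^ p - c G` and `G(0) = 0`, the integral of the kernel is
`lim G - G(0) = 0`; `G → 0` follows by splitting its integral at `x / 2`. Integrability needs only
a one-sided bound: `v ^ p ≥ x ^ p` on `(0, x]` gives `x ^ p - c G(x) ≤ e^{-cx} x ^ p`, and a
derivative with a convergent primitive that is bounded above by an integrable derivative is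
integrable.
-/

open MeasureTheory Real Set Filter Topology intervalIntegral

theorem integrableOn_Ioi_of_hasDerivAt_of_le {f g F G : ℝ → ℝ} {a m : ℝ}
    (hF₀ : ContinuousWithinAt F (Ici a) a) (hF : ∀ x ∈ Ioi a, HasDerivAt F (f x) x)
    (hFm : Tendsto F atTop (𝓝 m)) (hG₀ : ContinuousWithinAt G (Ici a) a)
    (hG : ∀ x ∈ Ioi a, HasDerivAt G (g x) x) (hg : IntegrableOn g (Ioi a))
    (hfg : ∀ x ∈ Ioi a, f x ≤ g x) :
    IntegrableOn f (Ioi a) := by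
  have hgf : IntegrableOn (fun x ↦ g x - f x) (Ioi a) :=
    integrableOn_Ioi_deriv_of_nonneg (hG₀.sub hF₀) (fun x hx ↦ (hG x hx).sub (hF x hx))
      (fun x hx ↦ sub_nonneg.2 (hfg x hx))
      ((tendsto_limUnder_of_hasDerivAt_of_integrableOn_Ioi hG hg).sub hFm)
  convert hg.sub hgf using 1
  ext x
  simp

theorem integral_exp_mul {c : ℝ} (hc : c ≠ 0) (a b : ℝ) :
    ∫ v in a..b, exp (c * v) = (exp (c * b) - exp (c * a)) / c := by
  rw [integral_comp_mul_left (fun v ↦ exp v) hc, integral_exp, smul_eq_mul, inv_mul_eq_div]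

noncomputable def expSmoothing (c p x : ℝ) : ℝ :=
  exp (-c * x) * ∫ v in (0:ℝ)..x, exp (c * v) * v ^ p

section

variable {c p x : ℝ}

theorem intervalIntegrable_exp_mul_rpow (hp : -1 < p) (a b : ℝ) :
    IntervalIntegrable (fun v ↦ exp (c * v) * v ^ p) volume a b :=
  (intervalIntegrable_rpow' hp).continuousOn_mul (by fun_prop)

theorem hasDerivAt_integral_exp_mul_rpow (hp : -1 < p) (hx : 0 < x) :
    HasDerivAt (fun y ↦ ∫ v in (0:ℝ)..y, exp (c * v) * v ^ p) (exp (c * x) * x ^ p) x :=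
  integral_hasDerivAt_right (intervalIntegrable_exp_mul_rpow hp 0 x)
    (Measurable.stronglyMeasurable (by fun_prop)).stronglyMeasurableAtFilter
    ((by fun_prop : Continuous fun v ↦ exp (c * v)).continuousAt.mul
      (continuousAt_rpow_const _ _ (Or.inl hx.ne')))

theorem continuous_expSmoothing (hp : -1 < p) : Continuous (expSmoothing c p) :=
  (by fun_prop : Continuous fun x ↦ exp (-c * x)).mul
    (continuous_primitive (intervalIntegrable_exp_mul_rpow hp) 0)

theorem expSmoothing_zero : expSmoothing c p 0 = 0 := by
  simp [expSmoothing]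

theorem expSmoothing_nonneg (hx : 0 ≤ x) : 0 ≤ expSmoothing c p x :=
  mul_nonneg (exp_pos _).le <|
    integral_nonneg hx fun _ hv ↦ mul_nonneg (exp_pos _).le (rpow_nonneg hv.1 _)

theorem hasDerivAt_expSmoothing (hp : -1 < p) (hx : 0 < x) :
    HasDerivAt (expSmoothing c p) (x ^ p - c * expSmoothing c p x) x := by
  have hexp : HasDerivAt (fun y ↦ exp (-c * y)) (exp (-c * x) * -c) x := by
    simpa using ((hasDerivAt_id x).const_mul (-c)).exp
  refine (hexp.mul (hasDerivAt_integral_exp_mul_rpow (c := c) hp hx)).congr_deriv ?_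
  rw [expSmoothing, ← mul_assoc, ← exp_add, neg_mul, neg_add_cancel, exp_zero]
  ring

theorem rpow_sub_mul_expSmoothing_le (hc : 0 < c) (hp1 : -1 < p) (hp0 : p ≤ 0) (hx : 0 ≤ x) :
    x ^ p - c * expSmoothing c p x ≤ exp (-c * x) * x ^ p := by
  have hmono :
      ∫ v in (0:ℝ)..x, x ^ p * exp (c * v) ≤ ∫ v in (0:ℝ)..x, exp (c * v) * v ^ p := by
    refine integral_mono_on_of_le_Ioo hx
      ((by fun_prop : Continuous fun v ↦ x ^ p * exp (c * v)).intervalIntegrable _ _)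
      (intervalIntegrable_exp_mul_rpow hp1 _ _) fun v hv ↦ ?_
    rw [mul_comm]
    exact mul_le_mul_of_nonneg_left (rpow_le_rpow_of_nonpos hv.1 hv.2.le hp0) (exp_pos _).le
  rw [intervalIntegral.integral_const_mul, integral_exp_mul hc.ne', mul_zero, exp_zero] at hmono
  have hscaled := mul_le_mul_of_nonneg_left hmono (mul_nonneg hc.le (exp_pos (-c * x)).le)
  rw [expSmoothing]
  calc x ^ p - c * (exp (-c * x) * ∫ v in (0:ℝ)..x, exp (c * v) * v ^ p)
      ≤ x ^ p - c * exp (-c * x) * (x ^ p * ((exp (c * x) - 1) / c)) := by linarith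
    _ = exp (-c * x) * x ^ p := by rw [neg_mul, exp_neg]; field_simp; ring

theorem expSmoothing_le (hc : 0 < c) (hp1 : -1 < p) (hp0 : p ≤ 0) (hx : 0 < x) :
    expSmoothing c p x ≤ (x / 2) ^ (p + 1) * exp (-c * (x / 2)) / (p + 1) + (x / 2) ^ p / c := by
  have hx2 : 0 < x / 2 := by positivity
  have hlow : ∫ v in (0:ℝ)..x / 2, exp (c * v) * v ^ p
      ≤ exp (c * (x / 2)) * ((x / 2) ^ (p + 1) / (p + 1)) := by
    calc ∫ v in (0:ℝ)..x / 2, exp (c * v) * v ^ p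
        ≤ ∫ v in (0:ℝ)..x / 2, exp (c * (x / 2)) * v ^ p :=
          integral_mono_on hx2.le (intervalIntegrable_exp_mul_rpow hp1 _ _)
            ((intervalIntegrable_rpow' hp1).const_mul _) fun v hv ↦
            mul_le_mul_of_nonneg_right (exp_le_exp.2 (by nlinarith [hv.2])) (rpow_nonneg hv.1 _)
      _ = _ := by
          rw [intervalIntegral.integral_const_mul, integral_rpow (Or.inl hp1),
            zero_rpow (by linarith), sub_zero]
  have hhigh : ∫ v in x / 2..x, exp (c * v) * v ^ p ≤ (x / 2) ^ p * (exp (c * x) / c) := by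
    calc ∫ v in x / 2..x, exp (c * v) * v ^ p
        ≤ ∫ v in x / 2..x, (x / 2) ^ p * exp (c * v) :=
          integral_mono_on (by linarith) (intervalIntegrable_exp_mul_rpow hp1 _ _)
            ((by fun_prop : Continuous fun v ↦ (x / 2) ^ p * exp (c * v)).intervalIntegrable _ _)
            fun v hv ↦ by
              rw [mul_comm]
              exact mul_le_mul_of_nonneg_right (rpow_le_rpow_of_nonpos hx2 hv.1 hp0) (exp_pos _).le
      _ = (x / 2) ^ p * ((exp (c * x) - exp (c * (x / 2))) / c) := by
          rw [intervalIntegral.integral_const_mul, integral_exp_mul hc.ne']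
      _ ≤ _ := by gcongr; linarith [exp_pos (c * (x / 2))]
  rw [expSmoothing, ← integral_add_adjacent_intervals
    (intervalIntegrable_exp_mul_rpow hp1 0 (x / 2)) (intervalIntegrable_exp_mul_rpow hp1 (x / 2) x)]
  calc exp (-c * x) * ((∫ v in (0:ℝ)..x / 2, exp (c * v) * v ^ p)
        + ∫ v in x / 2..x, exp (c * v) * v ^ p)
      ≤ exp (-c * x) * (exp (c * (x / 2)) * ((x / 2) ^ (p + 1) / (p + 1))
        + (x / 2) ^ p * (exp (c * x) / c)) := by gcongr
    _ = _ := by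
      simp only [neg_mul, exp_neg]
      rw [show c * x = c * (x / 2) + c * (x / 2) by ring, exp_add]
      field_simp

theorem tendsto_expSmoothing_atTop (hc : 0 < c) (hp1 : -1 < p) (hp0 : p < 0) :
    Tendsto (expSmoothing c p) atTop (𝓝 0) := by
  have hbound :
      Tendsto (fun y ↦ y ^ (p + 1) * exp (-c * y) / (p + 1) + y ^ p / c) atTop (𝓝 0) := by
    have hpow : Tendsto (fun y : ℝ ↦ y ^ p) atTop (𝓝 0) := by
      simpa using tendsto_rpow_neg_atTop (neg_pos.2 hp0)
    simpa using ((tendsto_rpow_mul_exp_neg_mul_atTop_nhds_zero (p + 1) c hc).div_const (p + 1)).add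
      (hpow.div_const c)
  refine squeeze_zero' ((eventually_ge_atTop 0).mono fun x hx ↦ expSmoothing_nonneg hx) ?_
    (hbound.comp (tendsto_id.atTop_div_const two_pos))
  filter_upwards [eventually_gt_atTop 0] with x hx using expSmoothing_le hc hp1 hp0.le hx

theorem integrableOn_rpow_sub_mul_expSmoothing (hc : 0 < c) (hp1 : -1 < p) (hp0 : p < 0) :
    IntegrableOn (fun x ↦ x ^ p - c * expSmoothing c p x) (Ioi 0) :=
  integrableOn_Ioi_of_hasDerivAt_of_le (continuous_expSmoothing hp1).continuousWithinAt
    (fun _ hx ↦ hasDerivAt_expSmoothing hp1 hx) (tendsto_expSmoothing_atTop hc hp1 hp0)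
    (continuous_primitive (intervalIntegrable_exp_mul_rpow (c := -c) hp1) 0).continuousWithinAt
    (fun _ hx ↦ hasDerivAt_integral_exp_mul_rpow hp1 hx)
    (by simpa [mul_comm] using integrableOn_rpow_mul_exp_neg_mul_rpow hp1 one_pos hc)
    (fun _ hx ↦ rpow_sub_mul_expSmoothing_le hc hp1 hp0.le hx.out.le)

theorem integral_Ioi_rpow_sub_mul_expSmoothing (hc : 0 < c) (hp1 : -1 < p) (hp0 : p < 0) :
    ∫ x in Ioi 0, x ^ p - c * expSmoothing c p x = 0 := by
  rw [integral_Ioi_of_hasDerivAt_of_tendsto (continuous_expSmoothing hp1).continuousWithinAt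
    (fun _ hx ↦ hasDerivAt_expSmoothing hp1 hx)
    (integrableOn_rpow_sub_mul_expSmoothing hc hp1 hp0) (tendsto_expSmoothing_atTop hc hp1 hp0),
    expSmoothing_zero, sub_zero]

theorem integral_exp_mul_mul_sub_rpow (c p u : ℝ) :
    ∫ s in u..0, exp (c * s) * (s - u) ^ p = expSmoothing c p (-u) := by
  have hshift := integral_comp_add_right (fun s ↦ exp (c * s) * (s - u) ^ p) u (a := 0) (b := -u)
  simp only [zero_add, neg_add_cancel, add_sub_cancel_right] at hshift
  rw [← hshift, expSmoothing, neg_mul_neg, ← intervalIntegral.integral_const_mul]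
  congr 1 with v
  rw [mul_add, exp_add]
  ring

end

theorem K_integral_zero (H T : ℝ) (hH : H ∈ Set.Ioo (0 : ℝ) (1/2)) (hT : 0 < T) :
    ∫ u : ℝ, (if u ≤ 0 then
        (-u) ^ (2*H - 1) -
          (2/T) * ∫ s in u..0, Real.exp (2*s/T) * (s - u) ^ (2*H - 1)
      else 0) = 0 := by
  have hp1 : -1 < 2 * H - 1 := by linarith [hH.1]
  have hp0 : 2 * H - 1 < 0 := by linarith [hH.2]
  have hK : ∀ u : ℝ, (if u ≤ 0 then (-u) ^ (2*H - 1) -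
        (2/T) * ∫ s in u..0, Real.exp (2*s/T) * (s - u) ^ (2*H - 1) else 0)
      = (Ici 0).indicator
          (fun x ↦ x ^ (2*H - 1) - 2 / T * expSmoothing (2 / T) (2*H - 1) x) (-u) := by
    intro u
    simp_rw [mul_div_right_comm (2 : ℝ), integral_exp_mul_mul_sub_rpow]
    simp only [indicator, mem_Ici, Left.nonneg_neg_iff]
  simp_rw [hK]
  rw [integral_neg_eq_self, MeasureTheory.integral_indicator measurableSet_Ici,
    integral_Ici_eq_integral_Ioi, integral_Ioi_rpow_sub_mul_expSmoothing (by positivity) hp1 hp0]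
end

section
/- For H ∈ (0,1/2) and T > 0, the function 𝒦_H(u) = 1_{u≤0} [ (−u)^{2H−1} − (2/T) ∫_u^0 e^{2s/T}(s−u)^{2H−1} ds ] satisfies 𝒦_H(u) / (−u)^{2H−2} → (T/2)(2H−1) as u → −∞. -/
/-!
With `u = -x`, `s = -r`, `p = 2H - 1` and `c = 2/T`, the claim is that
`x ^ p - c ∫₀ˣ e^(-cr) (x - r) ^ p dr ~ (p / c) x ^ (p - 1)` as `x → ∞`.
Since `c ∫₀ˣ e^(-cr) dr = 1 - e^(-cx)`, the left side equals
`x ^ p e^(-cx) + c ∫₀ˣ e^(-cr) (x ^ p - (x - r) ^ p) dr`, and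
`(x ^ p - (x - r) ^ p) x ^ (1 - p) → p r` for fixed `r`. On `[0, x/2]` the mean value theorem
bounds this by a multiple of `r`, so dominated convergence gives the limit
`p ∫₀^∞ r e^(-cr) dr = p / c²`; on `[x/2, x]` the factor `e^(-cr) ≤ e^(-cx/2)` beats the
integrable singularity at `r = x`.
-/

open MeasureTheory Real Filter Set Topology

variable {p c : ℝ}

lemma abs_rpow_sub_rpow_le {a b : ℝ} (hp : p ≤ 1) (ha : 0 < a) (hab : a ≤ b) :
    |b ^ p - a ^ p| ≤ |p| * a ^ (p - 1) * (b - a) := by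
  have hderiv : ∀ t ∈ Icc a b,
      HasDerivWithinAt (fun t : ℝ => t ^ p) (p * t ^ (p - 1)) (Icc a b) t :=
    fun t ht => (hasDerivAt_rpow_const (Or.inl (ha.trans_le ht.1).ne')).hasDerivWithinAt
  have hbound : ∀ t ∈ Icc a b, ‖p * t ^ (p - 1)‖ ≤ |p| * a ^ (p - 1) := fun t ht => by
    rw [norm_mul, norm_eq_abs, norm_eq_abs, abs_of_nonneg (rpow_nonneg (ha.le.trans ht.1) _)]
    exact mul_le_mul_of_nonneg_left (rpow_le_rpow_of_nonpos ha ht.1 (by linarith)) (abs_nonneg p)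
  simpa [norm_eq_abs, abs_of_nonneg (sub_nonneg.2 hab)] using
    (convex_Icc a b).norm_image_sub_le_of_norm_hasDerivWithin_le hderiv hbound
      (left_mem_Icc.2 hab) (right_mem_Icc.2 hab)

lemma tendsto_rpow_sub_rpow_sub_mul_rpow_one_sub (p r : ℝ) :
    Tendsto (fun x : ℝ => (x ^ p - (x - r) ^ p) * x ^ (1 - p)) atTop (𝓝 (p * r)) := by
  rcases eq_or_ne r 0 with rfl | hr
  · simp
  have hderiv : HasDerivAt (fun y : ℝ => (1 - y) ^ p) (-p) 0 := by
    simpa using ((hasDerivAt_id (0 : ℝ)).const_sub 1).rpow_const (p := p) (by simp)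
  have hinv : Tendsto (fun x : ℝ => r / x) atTop (𝓝[≠] 0) :=
    tendsto_nhdsWithin_of_tendsto_nhds_of_eventually_within _
      (tendsto_const_nhds.div_atTop tendsto_id)
      (eventually_gt_atTop 0 |>.mono fun x hx => div_ne_zero hr hx.ne')
  have hslope := ((hasDerivAt_iff_tendsto_slope.mp hderiv).comp hinv).const_mul (-r)
  rw [show -r * -p = p * r by ring] at hslope
  refine hslope.congr' ?_
  filter_upwards [eventually_gt_atTop (max r 0)] with x hx
  have hx0 : 0 < x := (le_max_right r 0).trans_lt hx
  have hsub : x - r = x * (1 - r / x) := by field_simp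
  have hpow : x ^ p * x ^ (1 - p) = x := by rw [← rpow_add hx0]; norm_num
  have h1 : 0 < 1 - r / x := by
    rw [sub_pos, div_lt_one hx0]; exact (le_max_left r 0).trans_lt hx
  simp only [Function.comp, slope_def_field, sub_zero, one_rpow]
  rw [hsub, mul_rpow hx0.le h1.le]
  generalize (1 - r / x) ^ p = y
  calc -r * ((y - 1) / (r / x)) = (1 - y) * x := by field_simp; ring
    _ = (x ^ p - x ^ p * y) * x ^ (1 - p) := by linear_combination (y - 1) * hpow

lemma integral_mul_exp_neg_mul_Ioi (hc : 0 < c) :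
    ∫ r in Ioi (0 : ℝ), r * exp (-(c * r)) = 1 / c ^ 2 := by
  have h := integral_rpow_mul_exp_neg_mul_Ioi (a := 2) two_pos hc
  rw [show (2 : ℝ) - 1 = 1 by norm_num] at h
  simpa using h

lemma abs_rpow_sub_rpow_sub_mul_rpow_one_sub_le {x r : ℝ} (hp : p ≤ 1) (hr : 0 < r)
    (hrx : r ≤ x / 2) : |(x ^ p - (x - r) ^ p) * x ^ (1 - p)| ≤ |p| * 2 ^ (1 - p) * r := by
  have hx : 0 < x := by linarith
  have hhalf : (x / 2) ^ (p - 1) * x ^ (1 - p) = 2 ^ (1 - p) := by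
    rw [div_rpow hx.le zero_le_two, div_mul_eq_mul_div, ← rpow_add hx, sub_add_sub_cancel',
      sub_self, rpow_zero, one_div, ← rpow_neg zero_le_two, neg_sub]
  have hxr : x / 2 ≤ x - r := by linarith
  have hmvt := abs_rpow_sub_rpow_le hp (by linarith : 0 < x - r) (by linarith : x - r ≤ x)
  rw [sub_sub_cancel] at hmvt
  calc |(x ^ p - (x - r) ^ p) * x ^ (1 - p)| = |x ^ p - (x - r) ^ p| * x ^ (1 - p) := by
        rw [abs_mul, abs_of_nonneg (rpow_nonneg hx.le _)]
    _ ≤ |p| * (x - r) ^ (p - 1) * r * x ^ (1 - p) := by gcongr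
    _ ≤ |p| * (x / 2) ^ (p - 1) * r * x ^ (1 - p) := by
        gcongr |p| * ?_ * r * x ^ (1 - p)
        exact rpow_le_rpow_of_nonpos (by positivity) hxr (sub_nonpos.2 hp)
    _ = |p| * 2 ^ (1 - p) * r := by rw [← hhalf]; ring

lemma tendsto_integral_exp_neg_mul_rpow_sub_rpow_near (hp : p ≤ 1) (hc : 0 < c) :
    Tendsto (fun x : ℝ => ∫ r in (0 : ℝ)..x / 2,
        exp (-(c * r)) * ((x ^ p - (x - r) ^ p) * x ^ (1 - p))) atTop (𝓝 (p / c ^ 2)) := by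
  set g : ℝ → ℝ → ℝ := fun x r => exp (-(c * r)) * ((x ^ p - (x - r) ^ p) * x ^ (1 - p))
  have hlim : Tendsto (fun x => ∫ r in Ioi 0, (Ioc 0 (x / 2)).indicator (g x) r) atTop
      (𝓝 (∫ r in Ioi 0, exp (-(c * r)) * (p * r))) := by
    refine tendsto_integral_filter_of_dominated_convergence
      (fun r => |p| * 2 ^ (1 - p) * (r * exp (-(c * r)))) ?_ ?_ ?_ ?_
    · exact .of_forall fun x =>
        (Measurable.aestronglyMeasurable (by fun_prop)).indicator measurableSet_Ioc
    · refine .of_forall fun x => (ae_restrict_mem measurableSet_Ioi).mono fun r hr => ?_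
      by_cases hrx : r ≤ x / 2
      · rw [indicator_of_mem (mem_Ioc.2 ⟨hr, hrx⟩), norm_mul, norm_of_nonneg (exp_pos _).le,
          norm_eq_abs]
        calc exp (-(c * r)) * |(x ^ p - (x - r) ^ p) * x ^ (1 - p)|
            ≤ exp (-(c * r)) * (|p| * 2 ^ (1 - p) * r) :=
              mul_le_mul_of_nonneg_left
                (abs_rpow_sub_rpow_sub_mul_rpow_one_sub_le hp hr hrx) (exp_pos _).le
          _ = _ := by ring
      · rw [indicator_of_notMem fun h => hrx h.2, norm_zero]
        have : (0 : ℝ) < r := hr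
        positivity
    · simpa using ((integrableOn_rpow_mul_exp_neg_mul_rpow (s := 1) (p := 1) (b := c)
        (by norm_num) one_pos hc).const_mul (|p| * 2 ^ (1 - p)))
    · refine (ae_restrict_mem measurableSet_Ioi).mono fun r hr => ?_
      refine (tendsto_const_nhds.mul (tendsto_rpow_sub_rpow_sub_mul_rpow_one_sub p r)).congr' ?_
      filter_upwards [eventually_ge_atTop (2 * r)] with x hx
      rw [indicator_of_mem (mem_Ioc.2 ⟨hr, by linarith⟩)]
  have hval : ∫ r in Ioi 0, exp (-(c * r)) * (p * r) = p / c ^ 2 := by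
    simp_rw [show ∀ r, exp (-(c * r)) * (p * r) = p * (r * exp (-(c * r))) from
      fun r => by ring]
    rw [MeasureTheory.integral_const_mul, integral_mul_exp_neg_mul_Ioi hc]
    ring
  rw [hval] at hlim
  refine hlim.congr' ?_
  filter_upwards [eventually_ge_atTop 0] with x hx
  rw [integral_indicator measurableSet_Ioc, Measure.restrict_restrict measurableSet_Ioc,
    inter_eq_self_of_subset_left Ioc_subset_Ioi_self,
    intervalIntegral.integral_of_le (by linarith)]

lemma intervalIntegrable_sub_rpow (hp : -1 < p) (x a b : ℝ) :
    IntervalIntegrable (fun r => (x - r) ^ p) volume a b := by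
  simpa using
    (intervalIntegral.intervalIntegrable_rpow' (a := x - a) (b := x - b) hp).comp_sub_left x

lemma integral_sub_rpow_half (hp : -1 < p) (x : ℝ) :
    ∫ r in x / 2..x, (x - r) ^ p = (x / 2) ^ (p + 1) / (p + 1) := by
  rw [intervalIntegral.integral_comp_sub_left (fun t => t ^ p), integral_rpow (Or.inl hp),
    sub_self, zero_rpow (by linarith), sub_zero, sub_half]

lemma abs_integral_exp_neg_mul_rpow_sub_rpow_far_le (hp : -1 < p) (hc : 0 ≤ c) {x : ℝ}
    (hx : 0 < x) :
    |∫ r in x / 2..x, exp (-(c * r)) * ((x ^ p - (x - r) ^ p) * x ^ (1 - p))|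
      ≤ (1 / 2 + 2 ^ (-(p + 1)) / (p + 1)) * (x ^ (2 : ℝ) * exp (-(c / 2) * x)) := by
  set E := exp (-(c / 2) * x)
  have hpointwise : ∀ r ∈ Ioc (x / 2) x,
      ‖exp (-(c * r)) * ((x ^ p - (x - r) ^ p) * x ^ (1 - p))‖
        ≤ E * x ^ (1 - p) * (x ^ p + (x - r) ^ p) := by
    rintro r ⟨hr₁, hr₂⟩
    have hexp : exp (-(c * r)) ≤ E := exp_le_exp.2 (by nlinarith)
    have hx₁ : 0 ≤ x ^ p := rpow_nonneg hx.le p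
    have hx₂ : 0 ≤ (x - r) ^ p := rpow_nonneg (by linarith) p
    have habs : |x ^ p - (x - r) ^ p| ≤ x ^ p + (x - r) ^ p :=
      abs_le.2 ⟨by linarith, by linarith⟩
    rw [norm_mul, norm_mul, norm_of_nonneg (exp_pos _).le,
      norm_of_nonneg (rpow_nonneg hx.le _), norm_eq_abs]
    calc exp (-(c * r)) * (|x ^ p - (x - r) ^ p| * x ^ (1 - p))
        ≤ E * ((x ^ p + (x - r) ^ p) * x ^ (1 - p)) := by gcongr
      _ = E * x ^ (1 - p) * (x ^ p + (x - r) ^ p) := by ring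
  have hsq : x ^ (1 - p) * x ^ (p + 1) = x ^ (2 : ℝ) := by
    rw [← rpow_add hx, show 1 - p + (p + 1) = (2 : ℝ) by ring]
  calc |∫ r in x / 2..x, exp (-(c * r)) * ((x ^ p - (x - r) ^ p) * x ^ (1 - p))|
      ≤ ∫ r in x / 2..x, E * x ^ (1 - p) * (x ^ p + (x - r) ^ p) :=
        intervalIntegral.norm_integral_le_of_norm_le (by linarith) (.of_forall hpointwise)
          ((intervalIntegrable_const.add (intervalIntegrable_sub_rpow hp x _ _)).const_mul _)
    _ = E * x ^ (1 - p) * (x / 2 * x ^ p + (x / 2) ^ (p + 1) / (p + 1)) := by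
        rw [intervalIntegral.integral_const_mul, intervalIntegral.integral_add
          intervalIntegrable_const (intervalIntegrable_sub_rpow hp x _ _),
          intervalIntegral.integral_const, integral_sub_rpow_half hp, smul_eq_mul, sub_half]
    _ = _ := by
        rw [div_rpow hx.le zero_le_two, rpow_neg zero_le_two]
        linear_combination (E / 2 + E * (2 ^ (p + 1))⁻¹ / (p + 1)) * hsq
          - E / 2 * x ^ (1 - p) * rpow_add_one hx.ne' p

lemma tendsto_integral_exp_neg_mul_rpow_sub_rpow_far (hp : -1 < p) (hc : 0 < c) :
    Tendsto (fun x : ℝ => ∫ r in x / 2..x,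
        exp (-(c * r)) * ((x ^ p - (x - r) ^ p) * x ^ (1 - p))) atTop (𝓝 0) := by
  have hbound := (tendsto_rpow_mul_exp_neg_mul_atTop_nhds_zero 2 (c / 2) (by positivity)).const_mul
    (1 / 2 + 2 ^ (-(p + 1)) / (p + 1))
  rw [mul_zero] at hbound
  refine squeeze_zero_norm' ?_ hbound
  filter_upwards [eventually_gt_atTop 0] with x hx
  exact abs_integral_exp_neg_mul_rpow_sub_rpow_far_le hp hc.le hx

lemma mul_integral_exp_neg_mul (hc : c ≠ 0) (x : ℝ) :
    c * ∫ r in (0 : ℝ)..x, exp (-(c * r)) = 1 - exp (-(c * x)) := by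
  rw [intervalIntegral.integral_comp_mul_left (fun t => exp (-t)) hc,
    intervalIntegral.integral_comp_neg, integral_exp, smul_eq_mul, mul_zero, neg_zero, exp_zero,
    mul_inv_cancel_left₀ hc]

lemma rpow_sub_mul_integral_exp_neg_mul_mul_sub_rpow_eq (hp : -1 < p) (hc : c ≠ 0) (x : ℝ) :
    x ^ p - c * ∫ r in (0 : ℝ)..x, exp (-(c * r)) * (x - r) ^ p
      = x ^ p * exp (-(c * x))
        + c * ∫ r in (0 : ℝ)..x, exp (-(c * r)) * (x ^ p - (x - r) ^ p) := by
  have hexp : IntervalIntegrable (fun r => exp (-(c * r))) volume 0 x :=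
    (by fun_prop : Continuous fun r => exp (-(c * r))).intervalIntegrable 0 x
  simp_rw [mul_sub]
  rw [intervalIntegral.integral_sub (hexp.mul_const _)
      ((intervalIntegrable_sub_rpow hp x 0 x).continuousOn_mul (by fun_prop)),
    intervalIntegral.integral_mul_const]
  linear_combination -x ^ p * mul_integral_exp_neg_mul hc x

theorem tendsto_rpow_sub_mul_integral_exp_neg_mul_mul_sub_rpow_div_rpow (hp₁ : -1 < p)
    (hp₂ : p ≤ 1) (hc : 0 < c) :
    Tendsto (fun x : ℝ =>
      (x ^ p - c * ∫ r in (0 : ℝ)..x, exp (-(c * r)) * (x - r) ^ p) / x ^ (p - 1))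
      atTop (𝓝 (p / c)) := by
  have hlin : Tendsto (fun x : ℝ => x * exp (-(c * x))) atTop (𝓝 0) := by
    simpa [neg_mul] using tendsto_rpow_mul_exp_neg_mul_atTop_nhds_zero 1 c hc
  have hlim := hlin.add (((tendsto_integral_exp_neg_mul_rpow_sub_rpow_near hp₂ hc).add
    (tendsto_integral_exp_neg_mul_rpow_sub_rpow_far hp₁ hc)).const_mul c)
  rw [show 0 + c * (p / c ^ 2 + 0) = p / c by field_simp; ring] at hlim
  refine hlim.congr' ?_
  filter_upwards [eventually_gt_atTop 0] with x hx
  have hint : ∀ a b, IntervalIntegrable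
      (fun r => exp (-(c * r)) * ((x ^ p - (x - r) ^ p) * x ^ (1 - p))) volume a b := fun a b =>
    ((intervalIntegrable_const.sub (intervalIntegrable_sub_rpow hp₁ x a b)).mul_const _
      ).continuousOn_mul (by fun_prop)
  have hdiv : ∀ y : ℝ, y / x ^ (p - 1) = y * x ^ (1 - p) := fun y => by
    rw [div_eq_mul_inv, ← rpow_neg hx.le, neg_sub]
  rw [intervalIntegral.integral_add_adjacent_intervals (hint _ _) (hint _ _),
    rpow_sub_mul_integral_exp_neg_mul_mul_sub_rpow_eq hp₁ hc.ne', hdiv]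
  simp_rw [← mul_assoc, intervalIntegral.integral_mul_const]
  have hx1 : x ^ p * x ^ (1 - p) = x := by rw [← rpow_add hx]; norm_num
  linear_combination -exp (-(c * x)) * hx1

theorem K_asymptotics_infinity (H T : ℝ) (hH : H ∈ Set.Ioo (0 : ℝ) (1/2)) (hT : 0 < T) :
    Tendsto (fun u : ℝ =>
        (if u ≤ 0 then
          (-u) ^ (2*H - 1) -
            (2/T) * ∫ s in u..0, Real.exp (2*s/T) * (s - u) ^ (2*H - 1)
        else 0) / (-u) ^ (2*H - 2))
      atBot (nhds (T/2 * (2*H - 1))) := by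
  have h := (tendsto_rpow_sub_mul_integral_exp_neg_mul_mul_sub_rpow_div_rpow
    (by linarith [hH.1] : -1 < 2 * H - 1) (by linarith [hH.2]) (div_pos two_pos hT)).comp
    tendsto_neg_atBot_atTop
  rw [show (2 * H - 1) / (2 / T) = T / 2 * (2 * H - 1) by field_simp] at h
  refine h.congr' ?_
  filter_upwards [eventually_le_atBot 0] with u hu
  have hreflect := intervalIntegral.integral_comp_neg (a := 0) (b := -u)
    (fun s => exp (2 * s / T) * (s - u) ^ (2 * H - 1))
  simp only [neg_neg, neg_zero] at hreflect
  simp only [Function.comp, if_pos hu, ← hreflect, show 2 * H - 1 - 1 = 2 * H - 2 by ring]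
  congr 3
  refine intervalIntegral.integral_congr fun r _ => ?_
  rw [show 2 * -r / T = -(2 / T * r) by ring, show -r - u = -u - r by ring]
end

section
/- For H ∈ (0,1/2), T > 0, define 𝒥_H(u) = −(2/T)(H−1/2) 1_{u≤0} ∫∫_{u≤s₁≤s₂≤0} e^{(s₁+s₂)/T} (s₁−u)^{H−1/2} (s₂−u)^{H−3/2} ds₁ ds₂. Then as u → 0⁻, 𝒥_H(u) ~ −(1/T) · (H−1/2)/(H(H+1/2)) · (−u)^{2H}. -/
open MeasureTheory Real Filter intervalIntegral Set

lemma pow_ii (u s p : ℝ) (hp : -1 < p) :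
    IntervalIntegrable (fun x => (x - u) ^ p) volume u s := by
  have := (intervalIntegral.intervalIntegrable_rpow' (a := 0) (b := s - u) hp).comp_sub_right u
  simpa using this

lemma pow_int (u s p : ℝ) (hp : -1 < p) :
    ∫ s₁ in u..s, (s₁ - u) ^ p = (s - u) ^ (p + 1) / (p + 1) := by
  rw [show (fun s₁ => (s₁ - u) ^ p) = fun s₁ => (fun x => x ^ p) (s₁ - u) from rfl]
  rw [intervalIntegral.integral_comp_sub_right (fun x => x ^ p) u]
  rw [integral_rpow (Or.inl hp)]
  rw [sub_self, Real.zero_rpow (by linarith), sub_zero]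

lemma key (H T : ℝ) (hH : H ∈ Set.Ioo (0 : ℝ) (1/2)) (hT : 0 < T) (u : ℝ) (hu : u < 0) :
    Real.exp (2*u/T) * ((-u) ^ (2*H) / (2*H*(H+1/2))) ≤
      (∫ s₂ in u..0, ∫ s₁ in u..s₂,
        Real.exp ((s₁ + s₂)/T) * (s₁ - u) ^ (H - 1/2) * (s₂ - u) ^ (H - 3/2)) ∧
    (∫ s₂ in u..0, ∫ s₁ in u..s₂,
        Real.exp ((s₁ + s₂)/T) * (s₁ - u) ^ (H - 1/2) * (s₂ - u) ^ (H - 3/2)) ≤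
      (-u) ^ (2*H) / (2*H*(H+1/2)) := by
  obtain ⟨hH0, hH2⟩ := hH
  set g : ℝ → ℝ := fun s₂ => ∫ s₁ in u..s₂,
      Real.exp ((s₁ + s₂)/T) * (s₁ - u) ^ (H - 1/2) * (s₂ - u) ^ (H - 3/2) with hg
  set h : ℝ → ℝ := fun s₂ => (s₂ - u) ^ (2*H - 1) / (H + 1/2) with hhdef
  -- pointwise bounds
  have claim : ∀ s₂ ∈ Icc u 0, Real.exp (2*u/T) * h s₂ ≤ g s₂ ∧ g s₂ ≤ h s₂ := by
    intro s₂ hs₂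
    obtain ⟨hs₂u, hs₂0⟩ := hs₂
    have hsub : 0 ≤ s₂ - u := by linarith
    have hqnn : 0 ≤ (s₂ - u) ^ (H - 3/2) := Real.rpow_nonneg hsub _
    have hii : IntervalIntegrable (fun s₁ => (s₁ - u) ^ (H - 1/2)) volume u s₂ :=
      pow_ii u s₂ _ (by linarith)
    have hiie : IntervalIntegrable
        (fun s₁ => Real.exp ((s₁ + s₂)/T) * (s₁ - u) ^ (H - 1/2)) volume u s₂ :=
      hii.continuousOn_mul (Continuous.continuousOn (by continuity))
    have hginner : g s₂ = (∫ s₁ in u..s₂,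
        Real.exp ((s₁ + s₂)/T) * (s₁ - u) ^ (H - 1/2)) * (s₂ - u) ^ (H - 3/2) := by
      rw [hg]
      exact intervalIntegral.integral_mul_const _ _
    have hpowint : ∫ s₁ in u..s₂, (s₁ - u) ^ (H - 1/2)
        = (s₂ - u) ^ (H + 1/2) / (H + 1/2) := by
      rw [pow_int u s₂ _ (by linarith), show H - 1/2 + 1 = H + 1/2 by ring]
    have hrpow : (s₂ - u) ^ (2*H - 1) = (s₂ - u) ^ (H + 1/2) * (s₂ - u) ^ (H - 3/2) := by
      rw [show 2*H - 1 = (H + 1/2) + (H - 3/2) by ring]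
      exact Real.rpow_add' hsub (by intro hc; linarith)
    have hlow : Real.exp (2*u/T) * ((s₂ - u) ^ (H + 1/2) / (H + 1/2)) ≤
        ∫ s₁ in u..s₂, Real.exp ((s₁ + s₂)/T) * (s₁ - u) ^ (H - 1/2) := by
      calc Real.exp (2*u/T) * ((s₂ - u) ^ (H + 1/2) / (H + 1/2))
          = ∫ s₁ in u..s₂, Real.exp (2*u/T) * (s₁ - u) ^ (H - 1/2) := by
            rw [intervalIntegral.integral_const_mul, hpowint]
        _ ≤ _ := by
            apply intervalIntegral.integral_mono_on hs₂u (hii.const_mul _) hiie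
            intro x hx
            apply mul_le_mul_of_nonneg_right _ (Real.rpow_nonneg (by linarith [hx.1]) _)
            apply Real.exp_le_exp.2
            have := hx.1
            gcongr
            linarith
    have hupp : (∫ s₁ in u..s₂, Real.exp ((s₁ + s₂)/T) * (s₁ - u) ^ (H - 1/2)) ≤
        (s₂ - u) ^ (H + 1/2) / (H + 1/2) := by
      calc (∫ s₁ in u..s₂, Real.exp ((s₁ + s₂)/T) * (s₁ - u) ^ (H - 1/2))
          ≤ ∫ s₁ in u..s₂, (s₁ - u) ^ (H - 1/2) := by
            apply intervalIntegral.integral_mono_on hs₂u hiie hii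
            intro x hx
            have : Real.exp ((x + s₂)/T) ≤ 1 := by
              rw [Real.exp_le_one_iff]
              apply div_nonpos_of_nonpos_of_nonneg _ hT.le
              linarith [hx.2]
            nlinarith [Real.rpow_nonneg (show (0:ℝ) ≤ x - u by linarith [hx.1]) (H - 1/2)]
        _ = _ := hpowint
    constructor
    · calc Real.exp (2*u/T) * h s₂
          = (Real.exp (2*u/T) * ((s₂ - u) ^ (H + 1/2) / (H + 1/2))) * (s₂ - u) ^ (H - 3/2) := by
            rw [hhdef]; simp only []; rw [hrpow]; ring
        _ ≤ g s₂ := by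
            rw [hginner]
            exact mul_le_mul_of_nonneg_right hlow hqnn
    · calc g s₂ ≤ ((s₂ - u) ^ (H + 1/2) / (H + 1/2)) * (s₂ - u) ^ (H - 3/2) := by
            rw [hginner]
            exact mul_le_mul_of_nonneg_right hupp hqnn
        _ = h s₂ := by rw [hhdef]; simp only []; rw [hrpow]; ring
  -- integrability of g on [u,0]
  have hppii : IntervalIntegrable (fun s₁ : ℝ => Real.exp (s₁/T) * (s₁ - u) ^ (H - 1/2))
      volume u 0 :=
    (pow_ii u 0 _ (by linarith)).continuousOn_mul (Continuous.continuousOn (by continuity))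
  have hFcont : ContinuousOn
      (fun b => ∫ s₁ in u..b, Real.exp (s₁/T) * (s₁ - u) ^ (H - 1/2)) (Set.uIcc u 0) :=
    intervalIntegral.continuousOn_primitive_interval' hppii Set.left_mem_uIcc
  have hg_eq : g = fun s₂ =>
      (Real.exp (s₂/T) * ∫ s₁ in u..s₂, Real.exp (s₁/T) * (s₁ - u) ^ (H - 1/2)) *
        (s₂ - u) ^ (H - 3/2) := by
    funext s₂
    rw [hg]
    simp only []
    rw [intervalIntegral.integral_mul_const]
    congr 1
    rw [← intervalIntegral.integral_const_mul]
    congr 1; funext s₁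
    rw [← mul_assoc, ← Real.exp_add, show s₂/T + s₁/T = (s₁ + s₂)/T by ring]
  have hIoc_sub : Set.Ioc u 0 ⊆ Set.uIcc u 0 := by
    rw [Set.uIcc_of_le hu.le]; exact Set.Ioc_subset_Icc_self
  have hgcont : ContinuousOn g (Set.Ioc u 0) := by
    rw [hg_eq]
    apply ContinuousOn.mul
    · exact ((Real.continuous_exp.comp (by continuity)).continuousOn).mul
        (hFcont.mono hIoc_sub)
    · apply ContinuousOn.rpow_const
      · exact (continuous_id.sub continuous_const).continuousOn
      · intro x hx
        left
        have h1 := hx.1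
        intro hc
        have h2 : x = u := sub_eq_zero.1 hc
        rw [h2] at h1
        exact lt_irrefl u h1
  have hhii : IntervalIntegrable h volume u 0 := (pow_ii u 0 _ (by linarith)).div_const _
  have hhIoc : IntegrableOn h (Set.Ioc u 0) volume :=
    (intervalIntegrable_iff_integrableOn_Ioc_of_le hu.le).1 hhii
  have hgii : IntervalIntegrable g volume u 0 := by
    rw [intervalIntegrable_iff_integrableOn_Ioc_of_le hu.le]
    apply Integrable.mono' hhIoc (hgcont.aestronglyMeasurable measurableSet_Ioc)
    rw [ae_restrict_iff' measurableSet_Ioc]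
    apply ae_of_all
    intro x hx
    have hc := claim x ⟨hx.1.le, hx.2⟩
    have hhnn : 0 ≤ h x :=
      div_nonneg (Real.rpow_nonneg (by linarith [hx.1]) _) (by linarith)
    have hg0 : 0 ≤ g x := le_trans (mul_nonneg (Real.exp_nonneg _) hhnn) hc.1
    rw [Real.norm_of_nonneg hg0]
    exact hc.2
  have hint_h : ∫ s in u..0, h s = (-u) ^ (2*H) / (2*H*(H+1/2)) := by
    rw [hhdef]
    simp only []
    rw [intervalIntegral.integral_div, pow_int u 0 _ (by linarith)]
    rw [show 2*H - 1 + 1 = 2*H by ring, zero_sub, div_div]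
  constructor
  · calc Real.exp (2*u/T) * ((-u) ^ (2*H) / (2*H*(H+1/2)))
        = ∫ s in u..0, Real.exp (2*u/T) * h s := by
          rw [intervalIntegral.integral_const_mul, hint_h]
      _ ≤ ∫ s in u..0, g s :=
          intervalIntegral.integral_mono_on hu.le (hhii.const_mul _) hgii
            (fun x hx => (claim x hx).1)
  · calc (∫ s in u..0, g s) ≤ ∫ s in u..0, h s :=
          intervalIntegral.integral_mono_on hu.le hgii hhii (fun x hx => (claim x hx).2)
      _ = _ := hint_h

theorem J_asymptotics_origin (H T : ℝ) (hH : H ∈ Set.Ioo (0 : ℝ) (1/2)) (hT : 0 < T) :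
    Tendsto (fun u : ℝ =>
        (-(2/T) * (H - 1/2) *
          (if u ≤ 0 then
            ∫ s₂ in u..0, ∫ s₁ in u..s₂,
              Real.exp ((s₁ + s₂)/T) * (s₁ - u) ^ (H - 1/2) * (s₂ - u) ^ (H - 3/2)
          else 0)) /
        (-(1/T) * ((H - 1/2) / (H * (H + 1/2))) * (-u) ^ (2*H)))
      (nhdsWithin 0 (Set.Iio 0)) (nhds 1) := by
  obtain ⟨hH0, hH2⟩ := hH
  have hbounds : ∀ u ∈ Set.Iio (0:ℝ),
      Real.exp (2*u/T) ≤
        (-(2/T) * (H - 1/2) *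
          (if u ≤ 0 then
            ∫ s₂ in u..0, ∫ s₁ in u..s₂,
              Real.exp ((s₁ + s₂)/T) * (s₁ - u) ^ (H - 1/2) * (s₂ - u) ^ (H - 3/2)
          else 0)) /
        (-(1/T) * ((H - 1/2) / (H * (H + 1/2))) * (-u) ^ (2*H)) ∧
        (-(2/T) * (H - 1/2) *
          (if u ≤ 0 then
            ∫ s₂ in u..0, ∫ s₁ in u..s₂,
              Real.exp ((s₁ + s₂)/T) * (s₁ - u) ^ (H - 1/2) * (s₂ - u) ^ (H - 3/2)
          else 0)) /
        (-(1/T) * ((H - 1/2) / (H * (H + 1/2))) * (-u) ^ (2*H)) ≤ 1 := by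
    intro u hu
    rw [Set.mem_Iio] at hu
    rw [if_pos hu.le]
    set I : ℝ := ∫ s₂ in u..0, ∫ s₁ in u..s₂,
        Real.exp ((s₁ + s₂)/T) * (s₁ - u) ^ (H - 1/2) * (s₂ - u) ^ (H - 3/2) with hI
    set K : ℝ := (-u) ^ (2*H) / (2*H*(H+1/2)) with hKdef
    have hK : 0 < K := div_pos (Real.rpow_pos_of_pos (neg_pos.2 hu) _)
      (by nlinarith)
    have hC : (-(2/T) * (H - 1/2)) ≠ 0 := by
      have h2T : 0 < 2/T := by positivity
      nlinarith
    have hDen : -(1/T) * ((H - 1/2) / (H * (H + 1/2))) * (-u) ^ (2*H)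
        = -(2/T) * (H - 1/2) * K := by
      rw [hKdef]
      field_simp
    have hkey := key H T ⟨hH0, hH2⟩ hT u hu
    rw [← hI, ← hKdef] at hkey
    rw [hDen, mul_div_mul_left I K hC]
    constructor
    · exact (le_div_iff₀ hK).2 hkey.1
    · exact (div_le_one hK).2 hkey.2
  apply tendsto_of_tendsto_of_tendsto_of_le_of_le'
    (g := fun u : ℝ => Real.exp (2*u/T)) (h := fun _ : ℝ => (1:ℝ))
  · have hc : Continuous fun u : ℝ => Real.exp (2*u/T) := by continuity
    exact (hc.tendsto' 0 1 (by simp)).mono_left nhdsWithin_le_nhds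
  · exact tendsto_const_nhds
  · filter_upwards [eventually_mem_nhdsWithin] with u hu using (hbounds u hu).1
  · filter_upwards [eventually_mem_nhdsWithin] with u hu using (hbounds u hu).2
end

section
/- For H ∈ (0,1/2) and any u < 0, lim_{ε→0⁺} [ 2(H−1/2) ∫_u^0 e^{2s/T}(s−u+ε)^{2H−2} ds + ε^{2H−1} e^{2u/T} ] = (−u)^{2H−1} − (2/T) ∫_u^0 e^{2s/T}(s−u)^{2H−1} ds. -/
open MeasureTheory Real Filter Set Topology

/- For ε > 0 the kernel (s - u + ε) ^ (2H - 1) is smooth on [u, 0], and integrating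
e^{2s/T} (s - u + ε) ^ (2H - 2) by parts turns the left-hand side into
(ε - u) ^ (2H - 1) - (2/T) ∫ e^{2s/T} (s - u + ε) ^ (2H - 1): the divergent boundary term
ε ^ (2H - 1) e^{2u/T} is exactly absorbed. Since 2H - 1 ∈ (-1, 0), the kernel
(s - u + ε) ^ (2H - 1) increases to the integrable (s - u) ^ (2H - 1) as ε ↓ 0, so dominated
convergence gives the limit. -/

theorem integral_mul_rpow_sub_add_by_parts {f f' : ℝ → ℝ} {a b ε p : ℝ} (hab : a ≤ b)
    (hε : 0 < ε) (hf : ∀ s, HasDerivAt f (f' s) s) (hf' : IntervalIntegrable f' volume a b) :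
    p * (∫ s in a..b, f s * (s - a + ε) ^ (p - 1)) + f a * ε ^ p =
      f b * (b - a + ε) ^ p - ∫ s in a..b, f' s * (s - a + ε) ^ p := by
  have hpos : ∀ s ∈ uIcc a b, 0 < s - a + ε := fun s hs => by
    rw [uIcc_of_le hab] at hs
    linarith [hs.1]
  have hkernel : ∀ s ∈ uIcc a b,
      HasDerivAt (fun s => (s - a + ε) ^ p) (p * (s - a + ε) ^ (p - 1)) s := fun s hs => by
    simpa using (((hasDerivAt_id s).sub_const a).add_const ε).rpow_const
      (Or.inl (hpos s hs).ne')
  have hkernel_cont : ContinuousOn (fun s => p * (s - a + ε) ^ (p - 1)) (uIcc a b) :=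
    continuousOn_const.mul <| (continuousOn_id.sub continuousOn_const).add continuousOn_const
      |>.rpow_const fun s hs => Or.inl (hpos s hs).ne'
  have hparts := intervalIntegral.integral_mul_deriv_eq_deriv_mul (fun s _ => hf s) hkernel
    hf' hkernel_cont.intervalIntegrable
  have hpull : (∫ s in a..b, f s * (p * (s - a + ε) ^ (p - 1))) =
      p * ∫ s in a..b, f s * (s - a + ε) ^ (p - 1) := by
    rw [← intervalIntegral.integral_const_mul]
    congr 1 with s
    ring
  rw [← hpull, hparts, sub_self, zero_add]
  ring

theorem tendsto_integral_mul_rpow_sub_add {g : ℝ → ℝ} {a b p : ℝ} (hg : Continuous g)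
    (hab : a ≤ b) (hp : -1 < p) (hp0 : p ≤ 0) :
    Tendsto (fun ε => ∫ s in a..b, g s * (s - a + ε) ^ p) (𝓝[>] 0)
      (𝓝 (∫ s in a..b, g s * (s - a) ^ p)) := by
  obtain ⟨C, hC⟩ :=
    (isCompact_Icc (a := a) (b := b)).exists_bound_of_continuousOn hg.continuousOn
  have hkernel_int : IntervalIntegrable (fun s => (s - a) ^ p) volume a b := by
    simpa using
      (intervalIntegral.intervalIntegrable_rpow' (a := 0) (b := b - a) hp).comp_sub_right a
  refine intervalIntegral.tendsto_integral_filter_of_dominated_convergence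
    (fun s => C * (s - a) ^ p) (Eventually.of_forall fun ε =>
      (hg.measurable.mul (by fun_prop)).aestronglyMeasurable) ?_
    (hkernel_int.const_mul C) ?_
  · filter_upwards [self_mem_nhdsWithin] with ε (hε : 0 < ε)
    refine Eventually.of_forall fun s hs => ?_
    rw [uIoc_of_le hab] at hs
    have hsa : 0 < s - a := sub_pos.2 hs.1
    have hgs := hC s (Ioc_subset_Icc_self hs)
    rw [norm_mul, norm_of_nonneg (rpow_nonneg (by linarith) _)]
    exact mul_le_mul hgs (rpow_le_rpow_of_nonpos hsa (by linarith) hp0)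
      (rpow_nonneg (by linarith) _) ((norm_nonneg _).trans hgs)
  · refine Eventually.of_forall fun s hs => ?_
    rw [uIoc_of_le hab] at hs
    have hcont : ContinuousAt (fun ε => g s * (s - a + ε) ^ p) 0 :=
      continuousAt_const.mul <| (continuousAt_const.add continuousAt_id).rpow_const
        (Or.inl (by simpa using (sub_pos.2 hs.1).ne'))
    simpa using hcont.tendsto.mono_left nhdsWithin_le_nhds

theorem K_regularization_limit_general (H T u : ℝ) (hH : H ∈ Set.Ioo (0 : ℝ) (1/2))
    (hu : u < 0) :
    Tendsto (fun ε : ℝ =>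
        2 * (H - 1/2) * (∫ s in u..0, Real.exp (2*s/T) * (s - u + ε) ^ (2*H - 2)) +
          ε ^ (2*H - 1) * Real.exp (2*u/T))
      (nhdsWithin 0 (Set.Ioi 0))
      (nhds ((-u) ^ (2*H - 1) -
        (2/T) * ∫ s in u..0, Real.exp (2*s/T) * (s - u) ^ (2*H - 1))) := by
  obtain ⟨hH0, hH1⟩ := hH
  have hexp : ∀ s, HasDerivAt (fun s => exp (2*s/T)) (2/T * exp (2*s/T)) s := fun s => by
    simpa [mul_comm] using (((hasDerivAt_id s).const_mul 2).div_const T).exp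
  have hboundary :
      Tendsto (fun ε : ℝ => (0 - u + ε) ^ (2*H - 1)) (𝓝[>] 0) (𝓝 ((-u) ^ (2*H - 1))) := by
    have hcont : ContinuousAt (fun ε : ℝ => (0 - u + ε) ^ (2*H - 1)) 0 :=
      (continuousAt_const.add continuousAt_id).rpow_const (Or.inl (by simpa using hu.ne))
    simpa using hcont.tendsto.mono_left nhdsWithin_le_nhds
  have hbulk := (tendsto_integral_mul_rpow_sub_add (g := fun s => exp (2*s/T)) (by fun_prop) hu.le
    (by linarith : (-1 : ℝ) < 2*H - 1) (by linarith)).const_mul (2/T)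
  refine (hboundary.sub hbulk).congr' ?_
  filter_upwards [self_mem_nhdsWithin] with ε (hε : 0 < ε)
  have hparts := integral_mul_rpow_sub_add_by_parts (p := 2*H - 1) hu.le hε hexp
    ((by fun_prop : Continuous fun s => 2/T * exp (2*s/T)).intervalIntegrable u 0)
  rw [show 2*H - 1 - 1 = 2*H - 2 by ring] at hparts
  simp only [mul_zero, zero_div, exp_zero, one_mul, mul_assoc,
    intervalIntegral.integral_const_mul] at hparts
  linear_combination -hparts

theorem K_regularization_limit (H T u : ℝ) (hH : H ∈ Set.Ioo (0 : ℝ) (1/2))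
    (hT : 0 < T) (hu : u < 0) :
    Tendsto (fun ε : ℝ =>
        2 * (H - 1/2) * (∫ s in u..0, Real.exp (2*s/T) * (s - u + ε) ^ (2*H - 2)) +
          ε ^ (2*H - 1) * Real.exp (2*u/T))
      (nhdsWithin 0 (Set.Ioi 0))
      (nhds ((-u) ^ (2*H - 1) -
        (2/T) * ∫ s in u..0, Real.exp (2*s/T) * (s - u) ^ (2*H - 1))) :=
  K_regularization_limit_general H T u hH hu
end

section
/- For H ∈ (1/2,1) and T > 0, with f_τ(s) = e^{−(τ−s)/T} 1_{s≤τ} − e^{s/T} 1_{s≤0} and 𝓛_{H,τ}(u) = (H−1/2)² (∫_{s≥u} f_τ(s)(s−u)^{H−3/2} ds)², one has τ^{1−2H} 𝓛_{H,τ}(τu) → [(1−u)^{H−1/2} 1_{u≤1} − (−u)^{H−1/2} 1_{u≤0}]² as τ → 0⁺, for every u ∉ {0,1}. -/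
open MeasureTheory Real Filter

theorem L_increment_scaling (H T : ℝ) (hH : H ∈ Set.Ioo (1/2 : ℝ) 1) (hT : 0 < T)
    (u : ℝ) (hu0 : u ≠ 0) (hu1 : u ≠ 1) :
    Tendsto (fun τ : ℝ =>
        τ ^ (1 - 2*H) *
          ((H - 1/2)^2 *
            (∫ s in Set.Ioi (τ*u),
              ((if s ≤ τ then Real.exp (-(τ - s)/T) else 0) -
                (if s ≤ 0 then Real.exp (s/T) else 0)) * (s - τ*u) ^ (H - 3/2))^2))
      (nhdsWithin 0 (Set.Ioi 0))
      (nhds (((if u ≤ 1 then (1 - u) ^ (H - 1/2) else 0) -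
        (if u ≤ 0 then (-u) ^ (H - 1/2) else 0))^2)) := by
  obtain ⟨hH1, hH2⟩ := hH
  have hr : (-1 : ℝ) < H - 3/2 := by linarith
  have hν : (0 : ℝ) < H - 1/2 := by linarith
  -- the rescaled integrand and its limit
  set F : ℝ → ℝ → ℝ := fun τ v =>
    ((if v ≤ 1 then Real.exp (τ*(v-1)/T) else 0) -
      (if v ≤ 0 then Real.exp (τ*v/T) else 0)) * (v - u) ^ (H - 3/2) with hFdef
  set f0 : ℝ → ℝ := fun v =>
    ((if v ≤ 1 then (1:ℝ) else 0) - (if v ≤ 0 then (1:ℝ) else 0)) * (v - u) ^ (H - 3/2)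
    with hf0def
  -- integrability of shifted rpow on bounded Ioc's
  have hint : ∀ a b : ℝ, IntegrableOn (fun v => (v - u) ^ (H - 3/2)) (Set.Ioc a b) := by
    intro a b
    rcases le_or_gt a b with hab | hab
    · have h1 : IntervalIntegrable (fun x : ℝ => x ^ (H - 3/2)) volume (a - u) (b - u) :=
        intervalIntegral.intervalIntegrable_rpow' hr
      have h2 := h1.comp_sub_right u
      simp only [sub_add_cancel] at h2
      exact (intervalIntegrable_iff_integrableOn_Ioc_of_le hab).mp h2
    · rw [Set.Ioc_eq_empty (not_lt.mpr hab.le)]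
      exact integrableOn_empty
  -- the dominating function
  set bound : ℝ → ℝ := fun v => (if v ≤ 1 then (2:ℝ) else 0) * (v - u) ^ (H - 3/2)
    with hbdef
  have hbound_int : Integrable bound (volume.restrict (Set.Ioi u)) := by
    have hzero : IntegrableOn bound (Set.Ioi (max u 1)) := by
      apply (integrable_zero _ _ _).congr
      filter_upwards [ae_restrict_mem measurableSet_Ioi] with v hv
      have : ¬ v ≤ 1 := by
        simp only [Set.mem_Ioi, lt_max_iff] at hv
        exact not_le.mpr (lt_of_le_of_lt (le_max_right u 1) hv)
      simp [hbdef, this]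
    have hmid : IntegrableOn bound (Set.Ioc u (max u 1)) := by
      apply ((hint u (max u 1)).const_mul 2).congr
      filter_upwards [ae_restrict_mem measurableSet_Ioc] with v hv
      have hv1 : v ≤ 1 := by
        rcases max_cases u 1 with ⟨he, hle⟩ | ⟨he, hle⟩
        · rw [he] at hv; linarith [hv.1, hv.2]
        · rw [he] at hv; exact hv.2
      simp [hbdef, hv1]
    have := hmid.union hzero
    rwa [Set.Ioc_union_Ioi_eq_Ioi (le_max_left u 1)] at this
  -- dominated convergence
  have hJ : Tendsto (fun τ => ∫ v in Set.Ioi u, F τ v) (nhdsWithin 0 (Set.Ioi 0))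
      (nhds (∫ v in Set.Ioi u, f0 v)) := by
    apply tendsto_integral_filter_of_dominated_convergence bound
    · filter_upwards with τ
      apply Measurable.aestronglyMeasurable
      exact ((Measurable.ite measurableSet_Iic (by fun_prop) measurable_const).sub
        (Measurable.ite measurableSet_Iic (by fun_prop) measurable_const)).mul (by fun_prop)
    · filter_upwards [self_mem_nhdsWithin] with τ hτ
      have hτ0 : (0:ℝ) < τ := hτ
      filter_upwards [ae_restrict_mem measurableSet_Ioi] with v hv
      have hvu : (0:ℝ) ≤ v - u := by simp only [Set.mem_Ioi] at hv; linarith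
      rw [hFdef, hbdef]
      simp only [Real.norm_eq_abs, abs_mul, abs_of_nonneg (Real.rpow_nonneg hvu _)]
      apply mul_le_mul_of_nonneg_right _ (Real.rpow_nonneg hvu _)
      by_cases h1 : v ≤ 1
      · simp only [if_pos h1]
        have ha1 : Real.exp (τ*(v-1)/T) ≤ 1 :=
          Real.exp_le_one_iff.mpr (div_nonpos_of_nonpos_of_nonneg
            (mul_nonpos_of_nonneg_of_nonpos hτ0.le (by linarith)) hT.le)
        have ha0 : (0:ℝ) ≤ Real.exp (τ*(v-1)/T) := (Real.exp_pos _).le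
        have hb0 : (0:ℝ) ≤ (if v ≤ 0 then Real.exp (τ*v/T) else 0) := by positivity
        have hb1 : (if v ≤ 0 then Real.exp (τ*v/T) else 0) ≤ 1 := by
          split_ifs with h0
          · exact Real.exp_le_one_iff.mpr (div_nonpos_of_nonpos_of_nonneg
              (mul_nonpos_of_nonneg_of_nonpos hτ0.le h0) hT.le)
          · exact zero_le_one
        rw [abs_le]
        constructor <;> linarith
      · have h0 : ¬ v ≤ 0 := fun h => h1 (by linarith)
        simp [h1, h0]
    · exact hbound_int
    · filter_upwards with v
      have c1 : Tendsto (fun τ : ℝ => Real.exp (τ*(v-1)/T)) (nhds 0) (nhds 1) := by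
        have hc : Continuous fun τ : ℝ => Real.exp (τ*(v-1)/T) := by fun_prop
        simpa using hc.tendsto 0
      have c2 : Tendsto (fun τ : ℝ => Real.exp (τ*v/T)) (nhds 0) (nhds 1) := by
        have hc : Continuous fun τ : ℝ => Real.exp (τ*v/T) := by fun_prop
        simpa using hc.tendsto 0
      have eq1 : ∀ τ : ℝ, F τ v =
          ((if v ≤ 1 then (1:ℝ) else 0) * Real.exp (τ*(v-1)/T) -
            (if v ≤ 0 then (1:ℝ) else 0) * Real.exp (τ*v/T)) * (v - u) ^ (H - 3/2) := by
        intro τ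
        rw [hFdef]
        by_cases h1 : v ≤ 1 <;> by_cases h2 : v ≤ 0 <;> simp [h1, h2]
      have eq2 : f0 v = ((if v ≤ 1 then (1:ℝ) else 0) * 1 -
          (if v ≤ 0 then (1:ℝ) else 0) * 1) * (v - u) ^ (H - 3/2) := by
        rw [hf0def]; simp
      have : Tendsto (fun τ : ℝ => F τ v) (nhds 0) (nhds (f0 v)) := by
        simp only [eq1]
        rw [eq2]
        exact ((tendsto_const_nhds.mul c1).sub (tendsto_const_nhds.mul c2)).mul_const _
      exact this.mono_left nhdsWithin_le_nhds
  -- value of the limit integral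
  have hf0ind : ∀ v : ℝ, f0 v = (Set.Ioc (0:ℝ) 1).indicator (fun v => (v - u) ^ (H - 3/2)) v := by
    intro v
    rw [hf0def]
    by_cases h2 : v ≤ 0
    · have h1 : v ≤ 1 := by linarith
      simp [h1, h2, Set.indicator_apply, Set.mem_Ioc, not_lt.mpr h2]
    · by_cases h1 : v ≤ 1
      · simp [h1, h2, Set.indicator_apply, Set.mem_Ioc, not_le.mp h2]
      · simp [h1, h2, Set.indicator_apply, Set.mem_Ioc]
  have hval : ((H - 1/2) * ∫ v in Set.Ioi u, f0 v) =
      ((if u ≤ 1 then (1 - u) ^ (H - 1/2) else 0) -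
        (if u ≤ 0 then (-u) ^ (H - 1/2) else 0)) := by
    have hI : (∫ v in Set.Ioi u, f0 v) =
        ∫ v in Set.Ioi u ∩ Set.Ioc 0 1, (v - u) ^ (H - 3/2) := by
      simp only [hf0ind]
      exact setIntegral_indicator measurableSet_Ioc
    rw [hI]
    rcases lt_trichotomy u 0 with hu | hu | hu
    · have hset : Set.Ioi u ∩ Set.Ioc (0:ℝ) 1 = Set.Ioc 0 1 :=
        Set.inter_eq_right.mpr fun v hv => lt_trans hu hv.1
      rw [hset, ← intervalIntegral.integral_of_le zero_le_one,
        show (∫ v in (0:ℝ)..1, (v - u) ^ (H - 3/2)) = ∫ x in (0-u)..(1-u), x ^ (H - 3/2) from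
          intervalIntegral.integral_comp_sub_right (fun x => x ^ (H - 3/2)) u,
        integral_rpow (Or.inl hr),
        show H - 3/2 + 1 = H - 1/2 by ring,
        if_pos (by linarith : u ≤ 1), if_pos hu.le, zero_sub]
      rw [← mul_div_assoc, mul_div_cancel_left₀ _ hν.ne']
    · exact absurd hu hu0
    · rcases lt_or_gt_of_ne hu1 with h1 | h1
      · have hset : Set.Ioi u ∩ Set.Ioc (0:ℝ) 1 = Set.Ioc u 1 := by
          ext v
          simp only [Set.mem_inter_iff, Set.mem_Ioi, Set.mem_Ioc]
          constructor
          · rintro ⟨hv1, _, hv3⟩; exact ⟨hv1, hv3⟩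
          · rintro ⟨hv1, hv2⟩; exact ⟨hv1, lt_trans hu hv1, hv2⟩
        rw [hset, ← intervalIntegral.integral_of_le h1.le,
          show (∫ v in u..1, (v - u) ^ (H - 3/2)) = ∫ x in (u-u)..(1-u), x ^ (H - 3/2) from
            intervalIntegral.integral_comp_sub_right (fun x => x ^ (H - 3/2)) u,
          integral_rpow (Or.inl hr),
          show H - 3/2 + 1 = H - 1/2 by ring,
          sub_self, Real.zero_rpow hν.ne', if_pos h1.le, if_neg (not_le.mpr hu)]
        rw [← mul_div_assoc, mul_div_cancel_left₀ _ hν.ne']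
      · have hset : Set.Ioi u ∩ Set.Ioc (0:ℝ) 1 = ∅ := by
          ext v
          simp only [Set.mem_inter_iff, Set.mem_Ioi, Set.mem_Ioc,
            Set.mem_empty_iff_false, iff_false, not_and]
          intro hv1 hv2
          intro hv3
          linarith
        rw [hset, if_neg (not_le.mpr h1), if_neg (by intro h; linarith : ¬ u ≤ 0)]
        simp
  -- identify the prelimit expression on Ioi 0
  have hmain : Set.EqOn (fun τ : ℝ =>
        τ ^ (1 - 2*H) *
          ((H - 1/2)^2 *
            (∫ s in Set.Ioi (τ*u),
              ((if s ≤ τ then Real.exp (-(τ - s)/T) else 0) -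
                (if s ≤ 0 then Real.exp (s/T) else 0)) * (s - τ*u) ^ (H - 3/2))^2))
      (fun τ : ℝ => ((H - 1/2) * ∫ v in Set.Ioi u, F τ v)^2) (Set.Ioi 0) := by
    intro τ hτ
    have hτ0 : (0:ℝ) < τ := hτ
    have hcv := integral_comp_mul_left_Ioi (fun s =>
      ((if s ≤ τ then Real.exp (-(τ - s)/T) else 0) -
        (if s ≤ 0 then Real.exp (s/T) else 0)) * (s - τ*u) ^ (H - 3/2)) u hτ0
    have hcv' : (∫ x in Set.Ioi u,
        ((if τ*x ≤ τ then Real.exp (-(τ - τ*x)/T) else 0) -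
          (if τ*x ≤ 0 then Real.exp (τ*x/T) else 0)) * (τ*x - τ*u) ^ (H - 3/2)) =
        τ⁻¹ * ∫ s in Set.Ioi (τ*u),
          ((if s ≤ τ then Real.exp (-(τ - s)/T) else 0) -
            (if s ≤ 0 then Real.exp (s/T) else 0)) * (s - τ*u) ^ (H - 3/2) := by
      simpa using hcv
    have h2 : ∀ v ∈ Set.Ioi u,
        ((if τ*v ≤ τ then Real.exp (-(τ - τ*v)/T) else 0) -
          (if τ*v ≤ 0 then Real.exp (τ*v/T) else 0)) * (τ*v - τ*u) ^ (H - 3/2)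
        = τ ^ (H - 3/2) * F τ v := by
      intro v hv
      have hv' : u < v := hv
      have e1 : (τ*v ≤ τ) ↔ (v ≤ 1) := mul_le_iff_le_one_right hτ0
      have e2 : (τ*v ≤ 0) ↔ (v ≤ 0) := by
        constructor <;> intro h <;> nlinarith
      rw [hFdef]
      simp only [e1, e2,
        show -(τ - τ*v)/T = τ*(v-1)/T by ring,
        show τ*v - τ*u = τ*(v-u) by ring,
        Real.mul_rpow hτ0.le (by linarith : (0:ℝ) ≤ v - u)]
      ring
    have h3 : (∫ x in Set.Ioi u,
        ((if τ*x ≤ τ then Real.exp (-(τ - τ*x)/T) else 0) -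
          (if τ*x ≤ 0 then Real.exp (τ*x/T) else 0)) * (τ*x - τ*u) ^ (H - 3/2)) =
        τ ^ (H - 3/2) * ∫ v in Set.Ioi u, F τ v := by
      rw [setIntegral_congr_fun measurableSet_Ioi h2]
      exact integral_const_mul _ _
    have h4 : (∫ s in Set.Ioi (τ*u),
        ((if s ≤ τ then Real.exp (-(τ - s)/T) else 0) -
          (if s ≤ 0 then Real.exp (s/T) else 0)) * (s - τ*u) ^ (H - 3/2)) =
        τ * (τ ^ (H - 3/2) * ∫ v in Set.Ioi u, F τ v) := by
      rw [← h3, hcv', ← mul_assoc, mul_inv_cancel₀ hτ0.ne', one_mul]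
    show τ ^ (1 - 2*H) * ((H - 1/2)^2 * (∫ s in Set.Ioi (τ*u),
        ((if s ≤ τ then Real.exp (-(τ - s)/T) else 0) -
          (if s ≤ 0 then Real.exp (s/T) else 0)) * (s - τ*u) ^ (H - 3/2))^2) = _
    rw [h4]
    have hp1 : τ * τ ^ (H - 3/2) = τ ^ (H - 1/2) := by
      rw [show H - 1/2 = 1 + (H - 3/2) by ring, Real.rpow_add hτ0, Real.rpow_one]
    have key : τ ^ (1 - 2*H) * (τ * τ ^ (H - 3/2))^2 = 1 := by
      rw [hp1, pow_two, ← Real.rpow_add hτ0, ← Real.rpow_add hτ0,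
        show 1 - 2*H + (H - 1/2 + (H - 1/2)) = 0 by ring, Real.rpow_zero]
    calc τ ^ (1 - 2*H) * ((H - 1/2)^2 *
          (τ * (τ ^ (H - 3/2) * ∫ v in Set.Ioi u, F τ v))^2)
        = (H - 1/2)^2 * (∫ v in Set.Ioi u, F τ v)^2 *
            (τ ^ (1 - 2*H) * (τ * τ ^ (H - 3/2))^2) := by ring
      _ = ((H - 1/2) * ∫ v in Set.Ioi u, F τ v)^2 := by rw [key]; ring
  have hfin : Tendsto (fun τ : ℝ => ((H - 1/2) * ∫ v in Set.Ioi u, F τ v)^2)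
      (nhdsWithin 0 (Set.Ioi 0))
      (nhds (((H - 1/2) * ∫ v in Set.Ioi u, f0 v)^2)) :=
    (hJ.const_mul (H - 1/2)).pow 2
  rw [hval] at hfin
  exact Tendsto.congr' (Filter.eventuallyEq_of_mem self_mem_nhdsWithin hmain).symm hfin
end

section
/- For H ∈ (1/2,1), T > 0, and f(s) = e^{s/T} 1_{s≤0}, the function 𝓛_H(u) = 1_{u≤0}(H−1/2)² (∫_u^0 e^{s/T}(s−u)^{H−3/2} ds)² is bounded on ℝ and integrable over ℝ. -/
/-!
Substituting `t = s - u` turns the inner integral at `u ≤ 0` into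
`G(x) = ∫₀ˣ e^{(t-x)/T} t^α dt` at `x = -u`, with `α = H - 3/2 ∈ (-1, -1/2)`.
`G` is continuous, being `e^{-x/T}` times a primitive of a locally integrable function.
Splitting at `x/2`: on `[0, x/2]` the exponential is at most `e^{-x/(2T)}`, which absorbs the
factor `x/2` left by `∫ t^α`; on `[x/2, x]` we have `t^α ≤ (x/2)^α` and `∫ e^{(t-x)/T} ≤ T`.
Hence `G(x) = O(x^α)`, so `G` is bounded and `G²` is dominated by `x^{2α}`, integrable at
infinity because `2α < -1`.
-/

open MeasureTheory Real Set

noncomputable def expRpowConv (T α x : ℝ) : ℝ := ∫ t in 0..x, exp ((t - x) / T) * t ^ α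

section

variable {T α : ℝ}

lemma intervalIntegrable_mul_rpow {f : ℝ → ℝ} (hf : Continuous f) (hα : -1 < α)
    (a b : ℝ) : IntervalIntegrable (fun t => f t * t ^ α) volume a b :=
  (intervalIntegral.intervalIntegrable_rpow' hα).continuousOn_mul hf.continuousOn

lemma mul_exp_neg_div_le (hT : 0 < T) (y : ℝ) : y * exp (-y / T) ≤ T := by
  rw [neg_div, exp_neg, mul_inv_le_iff₀ (exp_pos _)]
  calc y = T * (y / T) := by field_simp
    _ ≤ T * exp (y / T) := by gcongr; linarith [add_one_le_exp (y / T)]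

lemma integral_exp_sub_div_le (hT : 0 < T) (a x : ℝ) : ∫ t in a..x, exp ((t - x) / T) ≤ T := by
  have h := intervalIntegral.integral_comp_div_sub (a := a) (b := x) exp hT.ne' (x / T)
  simp only [← sub_div, sub_self, integral_exp, exp_zero, smul_eq_mul] at h
  rw [h]
  nlinarith [exp_pos ((a - x) / T)]

lemma integral_exp_mul_rpow_sub_eq_expRpowConv (T α u : ℝ) :
    ∫ s in u..0, exp (s / T) * (s - u) ^ α = expRpowConv T α (-u) := by
  have h := intervalIntegral.integral_comp_sub_right (a := u) (b := 0)
    (fun t => exp ((t - -u) / T) * t ^ α) u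
  simp only [sub_neg_eq_add, sub_add_cancel, sub_self, zero_sub] at h
  simp only [expRpowConv, sub_neg_eq_add, h]

lemma expRpowConv_nonneg {x : ℝ} (hx : 0 ≤ x) : 0 ≤ expRpowConv T α x :=
  intervalIntegral.integral_nonneg hx fun _ ht => mul_nonneg (exp_pos _).le (rpow_nonneg ht.1 _)

lemma continuous_expRpowConv (hα : -1 < α) : Continuous (expRpowConv T α) := by
  have h : expRpowConv T α = fun x => (∫ t in 0..x, exp (t / T) * t ^ α) / exp (x / T) := by
    funext x
    simp only [expRpowConv, sub_div, exp_sub, div_mul_eq_mul_div, intervalIntegral.integral_div]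
  rw [h]
  exact (intervalIntegral.continuous_primitive
    (intervalIntegrable_mul_rpow (by fun_prop) hα) 0).div (by fun_prop)
    fun x => (exp_pos _).ne'

lemma expRpowConv_le (hT : 0 < T) (hα : α ∈ Ioc (-1) 0) {x : ℝ} (hx : 0 < x) :
    expRpowConv T α x ≤ (T / (α + 1) + T) * (x / 2) ^ α := by
  have hint := intervalIntegrable_mul_rpow (f := fun t => exp ((t - x) / T))
    (by fun_prop) hα.1
  have h_near : ∫ t in 0..x / 2, exp ((t - x) / T) * t ^ α ≤ T / (α + 1) * (x / 2) ^ α := calc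
    _ ≤ ∫ t in 0..x / 2, exp (-(x / 2) / T) * t ^ α := by
      refine intervalIntegral.integral_mono_on (by positivity) (hint 0 (x / 2))
        (intervalIntegrable_mul_rpow continuous_const hα.1 _ _) fun t ht => ?_
      gcongr
      · exact rpow_nonneg ht.1 _
      · linarith [ht.2]
    _ = (x / 2) * exp (-(x / 2) / T) * (x / 2) ^ α / (α + 1) := by
      rw [intervalIntegral.integral_const_mul, integral_rpow (Or.inl hα.1),
        zero_rpow (by linarith [hα.1]), rpow_add (by positivity), rpow_one]
      ring
    _ ≤ T * (x / 2) ^ α / (α + 1) :=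
      div_le_div_of_nonneg_right (mul_le_mul_of_nonneg_right (mul_exp_neg_div_le hT _)
        (rpow_nonneg (by positivity) _)) (by linarith [hα.1])
    _ = T / (α + 1) * (x / 2) ^ α := by ring
  have h_far : ∫ t in x / 2..x, exp ((t - x) / T) * t ^ α ≤ T * (x / 2) ^ α := calc
    _ ≤ ∫ t in x / 2..x, exp ((t - x) / T) * (x / 2) ^ α := by
      refine intervalIntegral.integral_mono_on (by linarith) (hint (x / 2) x)
        (Continuous.intervalIntegrable (by fun_prop) _ _) fun t ht => ?_
      exact mul_le_mul_of_nonneg_left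
        (rpow_le_rpow_of_nonpos (by positivity) ht.1 hα.2) (exp_pos _).le
    _ = (∫ t in x / 2..x, exp ((t - x) / T)) * (x / 2) ^ α := intervalIntegral.integral_mul_const _ _
    _ ≤ T * (x / 2) ^ α := by gcongr; exact integral_exp_sub_div_le hT _ _
  rw [expRpowConv, ← intervalIntegral.integral_add_adjacent_intervals (hint 0 (x / 2))
    (hint (x / 2) x)]
  linarith

lemma exists_expRpowConv_le (hT : 0 < T) (hα : α ∈ Ioc (-1) 0) :
    ∃ B, ∀ x, 0 ≤ x → expRpowConv T α x ≤ B := by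
  obtain ⟨B, hB⟩ := (isCompact_Icc (a := (0 : ℝ)) (b := 1)).exists_bound_of_continuousOn
    (continuous_expRpowConv (T := T) hα.1).continuousOn
  refine ⟨max B ((T / (α + 1) + T) * (1 / 2) ^ α), fun x hx => ?_⟩
  rcases le_or_gt x 1 with hx1 | hx1
  · exact le_max_of_le_left ((le_abs_self _).trans (hB x ⟨hx, hx1⟩))
  · refine le_max_of_le_right ((expRpowConv_le hT hα (by linarith)).trans ?_)
    exact mul_le_mul_of_nonneg_left (rpow_le_rpow_of_nonpos (by norm_num) (by linarith) hα.2)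
      (add_nonneg (div_nonneg hT.le (by linarith [hα.1])) hT.le)

lemma integrableOn_Ici_expRpowConv_sq (hT : 0 < T) (hα : α ∈ Ioo (-1) (-1 / 2)) :
    IntegrableOn (fun x => expRpowConv T α x ^ 2) (Ici 0) := by
  have hcont : Continuous fun x => expRpowConv T α x ^ 2 := (continuous_expRpowConv hα.1).pow 2
  rw [← Icc_union_Ioi_eq_Ici zero_le_one]
  refine (hcont.continuousOn.integrableOn_compact isCompact_Icc).union ?_
  set C := (T / (α + 1) + T) / 2 ^ α
  have hdom : IntegrableOn (fun x => C ^ 2 * x ^ (α * 2)) (Ioi 1) :=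
    (integrableOn_Ioi_rpow_of_lt (by linarith [hα.2]) one_pos).const_mul _
  refine hdom.mono' hcont.aestronglyMeasurable.restrict
    (ae_restrict_of_forall_mem measurableSet_Ioi fun x hx => ?_)
  have hx0 : 0 < x := one_pos.trans hx
  have hdecay : expRpowConv T α x ≤ C * x ^ α := by
    rw [div_mul_eq_mul_div, mul_div_assoc, ← div_rpow hx0.le zero_le_two]
    exact expRpowConv_le hT ⟨hα.1, by linarith [hα.2]⟩ hx0
  have hsq : x ^ (α * 2) = (x ^ α) ^ 2 := by exact_mod_cast rpow_mul_natCast hx0.le α 2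
  rw [norm_pow, norm_of_nonneg (expRpowConv_nonneg hx0.le), hsq, ← mul_pow]
  exact pow_le_pow_left₀ (expRpowConv_nonneg hx0.le) hdecay 2

end

theorem L_bounded_integrable (H T : ℝ) (hH : H ∈ Set.Ioo (1/2 : ℝ) 1) (hT : 0 < T) :
    (∃ C, ∀ u : ℝ,
      |(if u ≤ 0 then
          (H - 1/2)^2 * (∫ s in u..0, Real.exp (s/T) * (s - u) ^ (H - 3/2))^2
        else 0)| ≤ C) ∧
      Integrable (fun u : ℝ =>
        if u ≤ 0 then
          (H - 1/2)^2 * (∫ s in u..0, Real.exp (s/T) * (s - u) ^ (H - 3/2))^2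
        else 0) := by
  have hα : H - 3 / 2 ∈ Ioo (-1) (-1 / 2) := ⟨by linarith [hH.1], by linarith [hH.2]⟩
  set L := (Ici 0).indicator fun x => (H - 1 / 2) ^ 2 * expRpowConv T (H - 3 / 2) x ^ 2
    with hL_def
  have hL : ∀ u, (if u ≤ 0 then
      (H - 1/2)^2 * (∫ s in u..0, Real.exp (s/T) * (s - u) ^ (H - 3/2))^2 else 0) = L (-u) := by
    intro u
    simp only [L, indicator_apply, mem_Ici, neg_nonneg, integral_exp_mul_rpow_sub_eq_expRpowConv]
  obtain ⟨B, hB⟩ := exists_expRpowConv_le hT ⟨hα.1, by linarith [hα.2]⟩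
  have hL_le : ∀ x, |L x| ≤ (H - 1 / 2) ^ 2 * B ^ 2 := by
    intro x
    by_cases hx : 0 ≤ x
    · rw [hL_def, indicator_of_mem (mem_Ici.2 hx), abs_of_nonneg (by positivity)]
      gcongr
      exacts [expRpowConv_nonneg hx, hB x hx]
    · rw [hL_def, indicator_of_notMem (notMem_Ici.2 (not_le.1 hx)), abs_zero]
      positivity
  simp only [hL]
  exact ⟨⟨_, fun u => hL_le (-u)⟩, ((integrable_indicator_iff measurableSet_Ici).2
    ((integrableOn_Ici_expRpowConv_sq hT hα).const_mul _)).comp_neg⟩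
end
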